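/- arXiv:1308.2845 — 7 statements merged into one kernel-verified Lean document; each statement's English description precedes it below -/
import Mathlib

section
/- Let m, d ≥ 1, let x_{kj} ∈ ℝ for 0 ≤ k ≤ m, 1 ≤ j ≤ n_k be finitely many data points with n = Σ_k n_k, let q : ℝ → ℝ^d, and let θ_1, …, θ_m ∈ ℝ^d with θ_0 = 0. Suppose ν_1, …, ν_m ∈ ℝ are such that the weights p̂_{kj} = n^{-1} { 1 + Σ_{s=1}^m ν_s [exp(θ_sᵀ q(x_{kj})) − 1] }^{-1} are all strictly positive and satisfy the constraints Σ_{k,j} p̂_{kj} exp(θ_rᵀ q(x_{kj})) = 1 for every r = 0, 1, …, m (the case r = 0 being Σ_{k,j} p̂_{kj} = 1). Then for any other weights p_{kj} > 0 satisfying the same constraints Σ_{k,j} p_{kj} exp(θ_rᵀ q(x_{kj})) = 1 for all r = 0, 1, …, m, one has Σ_{k,j} log p_{kj} ≤ Σ_{k,j} log p̂_{kj}. That is, p̂ maximizes Σ_{k,j} log p_{kj} over the constraint set. -/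
/-!
Since `log t ≤ t - 1`, every feasible `p` satisfies `Σ log p - Σ log p̂ ≤ Σ (p / p̂ - 1)`.
Writing `e_s = exp (θ_sᵀ q)`, the ratio `p / p̂ = n p (1 + Σ_s ν_s (e_s - 1))` is `n p` times an
affine combination of the constraint functions with coefficients summing to one, so the
constraints on `p` give `Σ p / p̂ = n`, and the right-hand side vanishes.
-/

open Finset

section

variable {ι σ : Type*} [Fintype ι] [Fintype σ]

theorem sum_log_le_sum_log_of_sum_div_le_card {p w : ι → ℝ} (hp : ∀ i, 0 < p i)
    (hw : ∀ i, 0 < w i) (h : ∑ i, p i / w i ≤ Fintype.card ι) :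
    ∑ i, Real.log (p i) ≤ ∑ i, Real.log (w i) := by
  have hlog : ∀ i, Real.log (p i) - Real.log (w i) ≤ p i / w i - 1 := fun i => by
    rw [← Real.log_div (hp i).ne' (hw i).ne']
    exact Real.log_le_sub_one_of_pos (div_pos (hp i) (hw i))
  have hsum := sum_le_sum fun i (_ : i ∈ univ) => hlog i
  simp only [sum_sub_distrib, sum_const, card_univ, nsmul_eq_mul, mul_one] at hsum
  linarith

theorem sum_mul_one_add_sum_mul_sub_one {p : ι → ℝ} {e : σ → ι → ℝ} (ν : σ → ℝ)
    (h₀ : ∑ i, p i = 1) (he : ∀ s, ∑ i, p i * e s i = 1) :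
    ∑ i, p i * (1 + ∑ s, ν s * (e s i - 1)) = 1 := by
  calc ∑ i, p i * (1 + ∑ s, ν s * (e s i - 1))
      = ∑ i, p i + ∑ s, ν s * (∑ i, p i * e s i - ∑ i, p i) := by
        simp only [mul_add, mul_one, sum_add_distrib, mul_sum, mul_sub, sum_sub_distrib]
        congr 2 <;> rw [Finset.sum_comm] <;>
          exact sum_congr rfl fun _ _ => sum_congr rfl fun _ _ => by ring
    _ = 1 := by simp [h₀, he]

theorem sum_div_eq_of_eq_inv_mul_one_add_sum_mul_sub_one {p w : ι → ℝ} {e : σ → ι → ℝ}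
    {ν : σ → ℝ} {c : ℝ} (hw : ∀ i, w i = (c * (1 + ∑ s, ν s * (e s i - 1)))⁻¹)
    (h₀ : ∑ i, p i = 1) (he : ∀ s, ∑ i, p i * e s i = 1) :
    ∑ i, p i / w i = c := by
  simp_rw [hw, div_inv_eq_mul, mul_left_comm _ c, ← mul_sum,
    sum_mul_one_add_sum_mul_sub_one ν h₀ he, mul_one]

end

theorem el_profile_weights_maximize_general (m d : ℕ)
    (n : Fin (m + 1) → ℕ)
    (x : (k : Fin (m + 1)) → Fin (n k) → ℝ)
    (q : ℝ → Fin d → ℝ)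
    (θ : Fin (m + 1) → Fin d → ℝ) (hθ0 : θ 0 = 0)
    (ν : Fin m → ℝ)
    (phat : (k : Fin (m + 1)) → Fin (n k) → ℝ)
    (hphat : ∀ k j, phat k j =
      ((∑ k', (n k' : ℝ)))⁻¹ *
        (1 + ∑ s : Fin m, ν s * (Real.exp (∑ i, θ s.succ i * q (x k j) i) - 1))⁻¹)
    (hphat_pos : ∀ k j, 0 < phat k j)
    (p : (k : Fin (m + 1)) → Fin (n k) → ℝ)
    (hp_pos : ∀ k j, 0 < p k j)
    (hp_constr : ∀ r : Fin (m + 1),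
      ∑ k, ∑ j, p k j * Real.exp (∑ i, θ r i * q (x k j) i) = 1) :
    ∑ k, ∑ j, Real.log (p k j) ≤ ∑ k, ∑ j, Real.log (phat k j) := by
  have uncurry (f : (k : Fin (m + 1)) → Fin (n k) → ℝ) :
      ∑ k, ∑ j, f k j = ∑ i : (k : Fin (m + 1)) × Fin (n k), f i.1 i.2 :=
    (Fintype.sum_sigma fun i : (k : Fin (m + 1)) × Fin (n k) => f i.1 i.2).symm
  have hp_sum : ∑ i : (k : Fin (m + 1)) × Fin (n k), p i.1 i.2 = 1 := by
    simpa [hθ0, uncurry] using hp_constr 0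
  have hcard : (Fintype.card ((k : Fin (m + 1)) × Fin (n k)) : ℝ) = ∑ k, (n k : ℝ) := by
    simp
  rw [uncurry, uncurry]
  refine sum_log_le_sum_log_of_sum_div_le_card (fun _ => hp_pos _ _) (fun _ => hphat_pos _ _)
    (hcard ▸ le_of_eq ?_)
  exact sum_div_eq_of_eq_inv_mul_one_add_sum_mul_sub_one
    (fun i => (hphat i.1 i.2).trans (mul_inv _ _).symm) hp_sum
    (fun s => (uncurry _).symm.trans (hp_constr s.succ))

/-- the profiling step of the empirical likelihood under the density ratio
model.  Weights `p̂_{kj} = n^{-1}{1 + Σ_s ν_s [exp(θ_sᵀ q(x_{kj})) - 1]}^{-1}` that are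
positive and satisfy the constraints `Σ_{k,j} p̂_{kj} exp(θ_rᵀ q(x_{kj})) = 1` for all
`r = 0, 1, …, m` maximize `Σ_{k,j} log p_{kj}` among all positive weights satisfying the
same constraints.  Here `θ_0 = 0`, so the `r = 0` constraint is `Σ_{k,j} p_{kj} = 1`. -/
theorem el_profile_weights_maximize (m d : ℕ) (hm : 1 ≤ m) (hd : 1 ≤ d)
    (n : Fin (m + 1) → ℕ) (hn : ∀ k, 0 < n k)
    (x : (k : Fin (m + 1)) → Fin (n k) → ℝ)
    (q : ℝ → Fin d → ℝ)
    (θ : Fin (m + 1) → Fin d → ℝ) (hθ0 : θ 0 = 0)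
    (ν : Fin m → ℝ)
    (phat : (k : Fin (m + 1)) → Fin (n k) → ℝ)
    (hphat : ∀ k j, phat k j =
      ((∑ k', (n k' : ℝ)))⁻¹ *
        (1 + ∑ s : Fin m, ν s * (Real.exp (∑ i, θ s.succ i * q (x k j) i) - 1))⁻¹)
    (hphat_pos : ∀ k j, 0 < phat k j)
    (hphat_constr : ∀ r : Fin (m + 1),
      ∑ k, ∑ j, phat k j * Real.exp (∑ i, θ r i * q (x k j) i) = 1)
    (p : (k : Fin (m + 1)) → Fin (n k) → ℝ)
    (hp_pos : ∀ k j, 0 < p k j)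
    (hp_constr : ∀ r : Fin (m + 1),
      ∑ k, ∑ j, p k j * Real.exp (∑ i, θ r i * q (x k j) i) = 1) :
    ∑ k, ∑ j, Real.log (p k j) ≤ ∑ k, ∑ j, Real.log (phat k j) :=
  el_profile_weights_maximize_general m d n x q θ hθ0 ν phat hphat hphat_pos p hp_pos hp_constr
end

section
/- Assume the density ratio model: G_0, …, G_m are Borel probability measures on ℝ, q : ℝ → ℝ^d is Borel measurable, θ_0 = 0 and θ_1, …, θ_m ∈ ℝ^d, and G_k has density x ↦ exp(θ_kᵀ q(x)) with respect to G_0 for every k. Let n_0, …, n_m be positive integers, n = Σ_k n_k, ρ_k = n_k/n, h(x) = Σ_{k=0}^m ρ_k exp(θ_kᵀ q(x)) and h_r(x) = ρ_r exp(θ_rᵀ q(x))/h(x). Let {X_{kj} : 0 ≤ k ≤ m, 1 ≤ j ≤ n_k} be independent random variables with X_{kj} distributed according to G_k, and define G̃_r(x) = n_r^{-1} Σ_{k,j} h_r(X_{kj}) 1{X_{kj} ≤ x}. Then for every 0 ≤ r ≤ m and every x ∈ ℝ, E[(G̃_r(x) − G_r((−∞, x]))²] ≤ n / n_r². -/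
/-!
Let `S = ∑_{k,j} h_r(X_{kj}) 1{X_{kj} ≤ x}`. Its summands are independent with values in `[0, 1]`,
so `Var S ≤ n / 4` by Popoviciu's inequality. Its mean is
`∑_k n_k ∫ h_r 1{· ≤ x} dG_k = ∫ (∑_k n_k e^{θ_kᵀq}) h_r 1{· ≤ x} dG_0 = n_r G_r((-∞, x])`:
the density of the pooled measure `∑_k n_k G_k` with respect to `G_0` cancels the denominator
of `h_r`. Hence the second moment of `G̃_r(x) - G_r((-∞, x])` is `Var S / n_r²`.
-/

open MeasureTheory ProbabilityTheory Finset

section WithDensity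

variable {α : Type*} [MeasurableSpace α] {μ : Measure α} {w : α → ℝ}

lemma integral_withDensity_ofReal (hw : Measurable w) (hw0 : ∀ t, 0 ≤ w t) (g : α → ℝ) :
    ∫ t, g t ∂μ.withDensity (fun t => ENNReal.ofReal (w t)) = ∫ t, w t * g t ∂μ := by
  rw [integral_withDensity_eq_integral_toReal_smul hw.ennreal_ofReal
    (.of_forall fun _ => ENNReal.ofReal_lt_top)]
  simp only [ENNReal.toReal_ofReal (hw0 _), smul_eq_mul]

lemma integrable_withDensity_ofReal_iff (hw : Measurable w) (hw0 : ∀ t, 0 ≤ w t) {g : α → ℝ} :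
    Integrable g (μ.withDensity fun t => ENNReal.ofReal (w t)) ↔
      Integrable (fun t => w t * g t) μ := by
  rw [integrable_withDensity_iff_integrable_smul' hw.ennreal_ofReal
    (.of_forall fun _ => ENNReal.ofReal_lt_top)]
  simp only [ENNReal.toReal_ofReal (hw0 _), smul_eq_mul]

end WithDensity

section Mixture

variable {ι α : Type*} [Fintype ι]

/-- The paper's `h_r` for `c = ρ` and `w k = exp (θ_kᵀ q)`. -/
noncomputable def weightRatio (c : ι → ℝ) (w : ι → α → ℝ) (r : ι) (t : α) : ℝ :=
  c r * w r t / ∑ k, c k * w k t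

variable {c : ι → ℝ} {w : ι → α → ℝ}

lemma weightRatio_div_const (a : ℝ) (ha : a ≠ 0) (r : ι) (t : α) :
    weightRatio (fun k => c k / a) w r t = weightRatio c w r t := by
  simp only [weightRatio, div_mul_eq_mul_div, ← Finset.sum_div]
  rw [div_div_div_cancel_right₀ ha]

lemma sum_mul_weightRatio (r : ι) {t : α} (ht : 0 < ∑ k, c k * w k t) :
    (∑ k, c k * w k t) * weightRatio c w r t = c r * w r t :=
  mul_div_cancel₀ _ ht.ne'

lemma weightRatio_mem_Icc (hc : ∀ k, 0 ≤ c k) (r : ι) {t : α} (hw : ∀ k, 0 ≤ w k t) :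
    weightRatio c w r t ∈ Set.Icc 0 1 := by
  have hterm : ∀ k, 0 ≤ c k * w k t := fun k => mul_nonneg (hc k) (hw k)
  refine ⟨div_nonneg (hterm r) (sum_nonneg fun k _ => hterm k), div_le_one_of_le₀ ?_
    (sum_nonneg fun k _ => hterm k)⟩
  exact single_le_sum (fun k _ => hterm k) (mem_univ r)

variable [MeasurableSpace α]

lemma measurable_weightRatio (hw : ∀ k, Measurable (w k)) (r : ι) :
    Measurable (weightRatio c w r) :=
  ((hw r).const_mul _).div (Finset.measurable_sum _ fun k _ => (hw k).const_mul _)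

lemma integrable_weightRatio_mul {μ : Measure α} (hw : ∀ k, Measurable (w k))
    (hw0 : ∀ k t, 0 ≤ w k t) (hc : ∀ k, 0 ≤ c k) (r : ι) {g : α → ℝ} (hg : Integrable g μ) :
    Integrable (fun t => weightRatio c w r t * g t) μ := by
  refine hg.bdd_mul (c := 1) (measurable_weightRatio hw r).aestronglyMeasurable
    (.of_forall fun t => ?_)
  obtain ⟨h0, h1⟩ := weightRatio_mem_Icc hc r (t := t) fun k => hw0 k t
  rwa [Real.norm_of_nonneg h0]

lemma sum_mul_integral_weightRatio_mul {μ₀ : Measure α} {μ : ι → Measure α}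
    (hw : ∀ k, Measurable (w k)) (hw0 : ∀ k t, 0 ≤ w k t)
    (hμ : ∀ k, μ k = μ₀.withDensity fun t => ENNReal.ofReal (w k t))
    (hc : ∀ k, 0 ≤ c k) (hpos : ∀ t, 0 < ∑ k, c k * w k t)
    {g : α → ℝ} (hg : ∀ k, Integrable g (μ k)) (r : ι) :
    ∑ k, c k * ∫ t, weightRatio c w r t * g t ∂μ k = c r * ∫ t, g t ∂μ r := by
  have hint : ∀ k, Integrable (fun t => w k t * (weightRatio c w r t * g t)) μ₀ := fun k => by
    rw [← integrable_withDensity_ofReal_iff (hw k) (hw0 k), ← hμ k]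
    exact integrable_weightRatio_mul hw hw0 hc r (hg k)
  calc ∑ k, c k * ∫ t, weightRatio c w r t * g t ∂μ k
      = ∫ t, ∑ k, c k * (w k t * (weightRatio c w r t * g t)) ∂μ₀ := by
        rw [integral_finsetSum _ fun k _ => (hint k).const_mul (c k)]
        refine sum_congr rfl fun k _ => ?_
        rw [hμ k, integral_withDensity_ofReal (hw k) (hw0 k), integral_const_mul]
    _ = ∫ t, c r * (w r t * g t) ∂μ₀ := by
        refine integral_congr_ae (.of_forall fun t => ?_)
        simp_rw [← mul_assoc]
        rw [← sum_mul, ← sum_mul, sum_mul_weightRatio r (hpos t)]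
    _ = c r * ∫ t, g t ∂μ r := by
        rw [integral_const_mul, hμ r, integral_withDensity_ofReal (hw r) (hw0 r)]

end Mixture

section Variance

variable {Ω : Type*} [MeasurableSpace Ω] {P : Measure Ω}

lemma variance_sum_le_of_mem_Icc [IsProbabilityMeasure P] {ι : Type*} [Fintype ι]
    {Y : ι → Ω → ℝ} {a b : ℝ} (hY : ∀ i, AEMeasurable (Y i) P)
    (hab : ∀ i, ∀ᵐ ω ∂P, Y i ω ∈ Set.Icc a b)
    (hindep : Pairwise fun i j => IndepFun (Y i) (Y j) P) :
    variance (∑ i, Y i) P ≤ Fintype.card ι * ((b - a) / 2) ^ 2 := by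
  rw [IndepFun.variance_sum (fun i _ => memLp_of_bounded (hab i) (hY i).aestronglyMeasurable 2)
    fun i _ j _ hij => hindep hij]
  calc ∑ i, variance (Y i) P ≤ ∑ _i : ι, ((b - a) / 2) ^ 2 :=
        sum_le_sum fun i _ => variance_le_sq_of_bounded (hab i) (hY i)
    _ = Fintype.card ι * ((b - a) / 2) ^ 2 := by simp

section Sigma

variable {ι β : Type*} [Fintype ι] {κ : ι → Type*} [∀ k, Fintype (κ k)] [MeasurableSpace β]
  {X : (k : ι) → κ k → Ω → β} {f : β → ℝ}

lemma integral_sum_sum_comp (hX : ∀ k j, AEMeasurable (X k j) P) {G : ι → Measure β}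
    (hlaw : ∀ k j, P.map (X k j) = G k) (hf : ∀ k, Integrable f (G k)) :
    ∫ ω, ∑ k, ∑ j, f (X k j ω) ∂P = ∑ k, Fintype.card (κ k) * ∫ t, f t ∂G k := by
  have hcomp : ∀ k j, Integrable (fun ω => f (X k j ω)) P := fun k j =>
    (integrable_map_measure (hlaw k j ▸ (hf k).aestronglyMeasurable) (hX k j)).1
      (hlaw k j ▸ hf k)
  rw [integral_finsetSum _ fun k _ => integrable_finsetSum _ fun j _ => hcomp k j]
  refine sum_congr rfl fun k _ => ?_
  rw [integral_finsetSum _ fun j _ => hcomp k j]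
  calc ∑ j, ∫ ω, f (X k j ω) ∂P = ∑ _j : κ k, ∫ t, f t ∂G k :=
        sum_congr rfl fun j _ => by
          rw [← hlaw k j, integral_map (hX k j) (hlaw k j ▸ (hf k).aestronglyMeasurable)]
    _ = Fintype.card (κ k) * ∫ t, f t ∂G k := by simp

lemma variance_sum_sum_comp_le [IsProbabilityMeasure P] (hX : ∀ k j, Measurable (X k j))
    (hindep : iIndepFun (fun kj : Σ k, κ k => X kj.1 kj.2) P) (hf : Measurable f)
    {a b : ℝ} (hab : ∀ t, f t ∈ Set.Icc a b) :
    variance (fun ω => ∑ k, ∑ j, f (X k j ω)) P ≤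
      (∑ k, Fintype.card (κ k) : ℝ) * ((b - a) / 2) ^ 2 := by
  have h := variance_sum_le_of_mem_Icc (Y := fun kj : Σ k, κ k => fun ω => f (X kj.1 kj.2 ω))
    (fun kj => (hf.comp (hX kj.1 kj.2)).aemeasurable) (fun kj => .of_forall fun ω => hab _)
    fun i j hij => (hindep.indepFun hij).comp hf hf
  convert h using 2
  · ext ω
    rw [Finset.sum_apply, Fintype.sum_sigma]
  · simp

end Sigma

lemma integral_inv_mul_sub_sq_eq_variance_div_sq {S : Ω → ℝ} (hS : AEMeasurable S P) {c m : ℝ}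
    (hc : c ≠ 0) (hm : ∫ ω, S ω ∂P = c * m) :
    ∫ ω, (c⁻¹ * S ω - m) ^ 2 ∂P = variance S P / c ^ 2 := by
  have hmean : ∫ ω, (c⁻¹ • S) ω ∂P = m := by
    simp only [Pi.smul_apply, smul_eq_mul]
    rw [integral_const_mul, hm, inv_mul_cancel_left₀ hc]
  rw [div_eq_inv_mul, ← inv_pow, ← variance_smul, variance_eq_integral (hS.const_smul _), hmean]
  rfl

end Variance

section OracleEstimator

variable {ι Ω : Type*} [Fintype ι] [MeasurableSpace Ω] {P : Measure Ω} {n : ι → ℕ}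
  {X : (k : ι) → Fin (n k) → Ω → ℝ} {G₀ : Measure ℝ} {G : ι → Measure ℝ} {w : ι → ℝ → ℝ}
  {g : ℝ → ℝ}

lemma integral_sum_sum_weightRatio_mul [∀ k, IsFiniteMeasure (G k)]
    (hX : ∀ k j, AEMeasurable (X k j) P) (hlaw : ∀ k j, P.map (X k j) = G k)
    (hw : ∀ k, Measurable (w k)) (hw0 : ∀ k t, 0 ≤ w k t)
    (hG : ∀ k, G k = G₀.withDensity fun t => ENNReal.ofReal (w k t))
    (hpos : ∀ t, 0 < ∑ k, (n k : ℝ) * w k t) (hg : ∀ k, Integrable g (G k)) (r : ι) :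
    ∫ ω, ∑ k, ∑ j, weightRatio (fun k => (n k : ℝ)) w r (X k j ω) * g (X k j ω) ∂P =
      n r * ∫ t, g t ∂G r := by
  have hc : ∀ k, (0 : ℝ) ≤ n k := fun k => Nat.cast_nonneg _
  rw [integral_sum_sum_comp hX hlaw fun k => integrable_weightRatio_mul hw hw0 hc r (hg k)]
  simp only [Fintype.card_fin]
  exact sum_mul_integral_weightRatio_mul hw hw0 hG hc hpos hg r

lemma integral_inv_mul_sum_sum_weightRatio_mul_sub_sq_le [IsProbabilityMeasure P]
    [∀ k, IsFiniteMeasure (G k)] (hX : ∀ k j, Measurable (X k j))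
    (hindep : iIndepFun (fun kj : Σ k, Fin (n k) => X kj.1 kj.2) P)
    (hlaw : ∀ k j, P.map (X k j) = G k) (hw : ∀ k, Measurable (w k)) (hw0 : ∀ k t, 0 ≤ w k t)
    (hG : ∀ k, G k = G₀.withDensity fun t => ENNReal.ofReal (w k t))
    (hpos : ∀ t, 0 < ∑ k, (n k : ℝ) * w k t) (hg : Measurable g)
    (hg01 : ∀ t, g t ∈ Set.Icc 0 1) {r : ι} (hr : 0 < n r) :
    ∫ ω, ((n r : ℝ)⁻¹ * ∑ k, ∑ j, weightRatio (fun k => (n k : ℝ)) w r (X k j ω) * g (X k j ω) -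
        ∫ t, g t ∂G r) ^ 2 ∂P ≤ (∑ k, (n k : ℝ)) / (n r : ℝ) ^ 2 := by
  set f : ℝ → ℝ := fun t => weightRatio (fun k => (n k : ℝ)) w r t * g t
  have hf : Measurable f := (measurable_weightRatio hw r).mul hg
  have hf01 : ∀ t, f t ∈ Set.Icc 0 1 := fun t => by
    obtain ⟨h0, h1⟩ := weightRatio_mem_Icc (fun k => Nat.cast_nonneg (n k)) r fun k => hw0 k t
    exact ⟨mul_nonneg h0 (hg01 t).1, mul_le_one₀ h1 (hg01 t).1 (hg01 t).2⟩
  have hsum : Measurable fun ω => ∑ k, ∑ j, f (X k j ω) :=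
    Finset.measurable_sum _ fun k _ => Finset.measurable_sum _ fun j _ => hf.comp (hX k j)
  have hmean := integral_sum_sum_weightRatio_mul (fun k j => (hX k j).aemeasurable) hlaw hw hw0
    hG hpos (fun k => (memLp_of_bounded (.of_forall hg01) hg.aestronglyMeasurable 1).integrable
      le_rfl) r
  rw [integral_inv_mul_sub_sq_eq_variance_div_sq hsum.aemeasurable (Nat.cast_pos.2 hr).ne' hmean]
  calc _ ≤ (∑ k, (n k : ℝ)) * ((1 - 0) / 2) ^ 2 / (n r : ℝ) ^ 2 := by
        gcongr
        simpa using variance_sum_sum_comp_le hX hindep hf hf01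
    _ ≤ (∑ k, (n k : ℝ)) / (n r : ℝ) ^ 2 := by
        gcongr
        exact mul_le_of_le_one_right (sum_nonneg fun k _ => Nat.cast_nonneg _) (by norm_num)

end OracleEstimator

theorem drm_oracle_estimator_second_moment_general (m d : ℕ)
    (G : Fin (m + 1) → Measure ℝ) [∀ k, IsProbabilityMeasure (G k)]
    (q : ℝ → Fin d → ℝ) (hq : Measurable q)
    (θ : Fin (m + 1) → Fin d → ℝ)
    (hG : ∀ k, G k =
      (G 0).withDensity fun t => ENNReal.ofReal (Real.exp (∑ i, θ k i * q t i)))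
    (n : Fin (m + 1) → ℕ) (hn : ∀ k, 0 < n k)
    (ρ : Fin (m + 1) → ℝ) (hρ : ∀ k, ρ k = (n k : ℝ) / ∑ k', (n k' : ℝ))
    (hfun : Fin (m + 1) → ℝ → ℝ)
    (hhfun : ∀ k t, hfun k t =
      ρ k * Real.exp (∑ i, θ k i * q t i) /
        ∑ k', ρ k' * Real.exp (∑ i, θ k' i * q t i))
    {Ω : Type} [MeasurableSpace Ω] (P : Measure Ω) [IsProbabilityMeasure P]
    (X : (k : Fin (m + 1)) → Fin (n k) → Ω → ℝ)
    (hXmeas : ∀ k j, Measurable (X k j))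
    (hXlaw : ∀ k j, Measure.map (X k j) P = G k)
    (hXindep : iIndepFun
      (fun kj : Σ k : Fin (m + 1), Fin (n k) => X kj.1 kj.2) P)
    (r : Fin (m + 1)) (x : ℝ) :
    ∫ ω, (((n r : ℝ))⁻¹ *
        (∑ k, ∑ j, hfun r (X k j ω) * (if X k j ω ≤ x then (1 : ℝ) else 0)) -
        (G r (Set.Iic x)).toReal) ^ 2 ∂P ≤
      (∑ k', (n k' : ℝ)) / (n r : ℝ) ^ 2 := by
  set e : Fin (m + 1) → ℝ → ℝ := fun k t => Real.exp (∑ i, θ k i * q t i)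
  have he : ∀ k, Measurable (e k) := fun k =>
    (Finset.measurable_sum _ fun i _ => ((measurable_pi_apply i).comp hq).const_mul _).exp
  have hn' : ∀ k, (0 : ℝ) < n k := fun k => Nat.cast_pos.2 (hn k)
  have hratio : hfun r = weightRatio (fun k => (n k : ℝ)) e r := by
    funext t
    rw [hhfun, ← weightRatio_div_const _ (sum_pos (fun k _ => hn' k) univ_nonempty).ne']
    simp only [weightRatio, hρ, e]
  have hcdf : ∫ t, (if t ≤ x then (1 : ℝ) else 0) ∂G r = (G r (Set.Iic x)).toReal := by
    rw [← measureReal_def, ← integral_indicator_one measurableSet_Iic]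
    congr with t
  rw [← hcdf, hratio]
  refine integral_inv_mul_sum_sum_weightRatio_mul_sub_sq_le (g := fun t => if t ≤ x then 1 else 0)
    hXmeas hXindep hXlaw he (fun k t => (Real.exp_pos _).le) hG
    (fun t => sum_pos (fun k _ => mul_pos (hn' k) (Real.exp_pos _)) univ_nonempty)
    (measurable_const.ite measurableSet_Iic measurable_const) (fun t => ?_) (hn r)
  by_cases ht : t ≤ x <;> simp [ht]

/-- under the density ratio model, the linearized (oracle) empirical-likelihood
estimator `G̃_r(x) = n_r^{-1} Σ_{k,j} h_r(X_{kj}) 1{X_{kj} ≤ x}` satisfies the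
uniform-in-`x` second moment bound `E[(G̃_r(x) - G_r((-∞,x]))²] ≤ n / n_r²`. -/
theorem drm_oracle_estimator_second_moment (m d : ℕ) (hm : 1 ≤ m) (hd : 1 ≤ d)
    (G : Fin (m + 1) → Measure ℝ) [∀ k, IsProbabilityMeasure (G k)]
    (q : ℝ → Fin d → ℝ) (hq : Measurable q)
    (θ : Fin (m + 1) → Fin d → ℝ) (hθ0 : θ 0 = 0)
    (hG : ∀ k, G k =
      (G 0).withDensity fun t => ENNReal.ofReal (Real.exp (∑ i, θ k i * q t i)))
    (n : Fin (m + 1) → ℕ) (hn : ∀ k, 0 < n k)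
    (ρ : Fin (m + 1) → ℝ) (hρ : ∀ k, ρ k = (n k : ℝ) / ∑ k', (n k' : ℝ))
    (hfun : Fin (m + 1) → ℝ → ℝ)
    (hhfun : ∀ k t, hfun k t =
      ρ k * Real.exp (∑ i, θ k i * q t i) /
        ∑ k', ρ k' * Real.exp (∑ i, θ k' i * q t i))
    {Ω : Type} [MeasurableSpace Ω] (P : Measure Ω) [IsProbabilityMeasure P]
    (X : (k : Fin (m + 1)) → Fin (n k) → Ω → ℝ)
    (hXmeas : ∀ k j, Measurable (X k j))
    (hXlaw : ∀ k j, Measure.map (X k j) P = G k)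
    (hXindep : iIndepFun
      (fun kj : Σ k : Fin (m + 1), Fin (n k) => X kj.1 kj.2) P)
    (r : Fin (m + 1)) (x : ℝ) :
    ∫ ω, (((n r : ℝ))⁻¹ *
        (∑ k, ∑ j, hfun r (X k j ω) * (if X k j ω ≤ x then (1 : ℝ) else 0)) -
        (G r (Set.Iic x)).toReal) ^ 2 ∂P ≤
      (∑ k', (n k' : ℝ)) / (n r : ℝ) ^ 2 :=
  drm_oracle_estimator_second_moment_general m d G q hq θ hG n hn ρ hρ hfun hhfun P X hXmeas hXlaw
    hXindep r x
end

section
/- Assume the density ratio model with G_0, …, G_m Borel probability measures on ℝ, q : ℝ → ℝ^d Borel measurable whose first component satisfies q_1(x) = 1 for all x, θ_0 = 0, θ_1, …, θ_m ∈ ℝ^d, G_k with density exp(θ_kᵀ q(·)) with respect to G_0, ρ_0, …, ρ_m > 0 with Σ ρ_k = 1, h = Σ_k ρ_k exp(θ_kᵀ q), h_k = ρ_k exp(θ_kᵀ q)/h, Ḡ = Σ_k ρ_k G_k, and ∫ ‖q‖² dḠ < ∞. Let W be the md × md block matrix with (r,s) block W_{rs} = ∫ (δ_{rs} h_r − h_r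 h_s) q qᵀ dḠ for 1 ≤ r, s ≤ m, and for 0 ≤ k ≤ m let B_k ∈ ℝ^{md} be the block vector whose sth block (1 ≤ s ≤ m) is B_{k,s} = ∫ (δ_{ks} h_k − h_k h_s) q dḠ. Let v_k ∈ ℝ^{md} (1 ≤ k ≤ m) be the block vector whose sth block is δ_{ks} e_1, where e_1 = (1,0,…,0)ᵀ ∈ ℝ^d. Then W v_k = B_k for every 1 ≤ k ≤ m, and B_0 = − Σ_{k=1}^m B_k. -/
open MeasureTheory

/-- in the density ratio model with `q₁ ≡ 1` and `∫ ‖q‖² dḠ < ∞`, the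
information-type block matrix `W` (blocks `W_{rs} = ∫ (δ_{rs} h_r - h_r h_s) q qᵀ dḠ`,
`1 ≤ r,s ≤ m`) and the block vectors `B_k` (s-th block `∫ (δ_{ks} h_k - h_k h_s) q dḠ`)
satisfy `W v_k = B_k` for `1 ≤ k ≤ m`, where `v_k` has s-th block `δ_{ks} e₁`, and
`B_0 = -Σ_{k=1}^m B_k`. -/
theorem drm_W_mulVec_eq_B (m d : ℕ) (hm : 1 ≤ m) (hd : 1 ≤ d)
    (G : Fin (m + 1) → Measure ℝ) [∀ k, IsProbabilityMeasure (G k)]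
    (q : ℝ → Fin d → ℝ) (hq : Measurable q)
    (hq1 : ∀ t, q t ⟨0, hd⟩ = 1)
    (θ : Fin (m + 1) → Fin d → ℝ) (hθ0 : θ 0 = 0)
    (hG : ∀ k, G k =
      (G 0).withDensity fun t => ENNReal.ofReal (Real.exp (∑ i, θ k i * q t i)))
    (ρ : Fin (m + 1) → ℝ) (hρpos : ∀ k, 0 < ρ k) (hρsum : ∑ k, ρ k = 1)
    (hfun : Fin (m + 1) → ℝ → ℝ)
    (hhfun : ∀ k t, hfun k t =
      ρ k * Real.exp (∑ i, θ k i * q t i) /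
        ∑ k', ρ k' * Real.exp (∑ i, θ k' i * q t i))
    (Gbar : Measure ℝ) (hGbar : Gbar = ∑ k, ENNReal.ofReal (ρ k) • G k)
    (hq2int : Integrable (fun t => ∑ i, (q t i) ^ 2) Gbar)
    (W : Matrix (Fin m × Fin d) (Fin m × Fin d) ℝ)
    (hW : ∀ (r s : Fin m) (i j : Fin d), W (r, i) (s, j) =
      ∫ t, ((if r = s then hfun r.succ t else 0) - hfun r.succ t * hfun s.succ t) *
        (q t i * q t j) ∂Gbar)
    (B : Fin (m + 1) → Fin m × Fin d → ℝ)
    (hB : ∀ (k : Fin (m + 1)) (s : Fin m) (i : Fin d), B k (s, i) =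
      ∫ t, ((if k = s.succ then hfun k t else 0) - hfun k t * hfun s.succ t) * q t i ∂Gbar)
    (v : Fin m → Fin m × Fin d → ℝ)
    (hv : ∀ (k s : Fin m) (i : Fin d), v k (s, i) =
      if s = k ∧ i = (⟨0, hd⟩ : Fin d) then 1 else 0) :
    (∀ k : Fin m, W.mulVec (v k) = B k.succ) ∧
      B 0 = -∑ k : Fin m, B k.succ := by

  -- basic pointwise facts
  set den : ℝ → ℝ := fun t => ∑ k', ρ k' * Real.exp (∑ i, θ k' i * q t i) with hden
  have hdenpos : ∀ t, 0 < den t := by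
    intro t
    refine Finset.sum_pos (fun k _ => ?_) ⟨0, Finset.mem_univ 0⟩
    exact mul_pos (hρpos k) (Real.exp_pos _)
  have hnumpos : ∀ k t, 0 < ρ k * Real.exp (∑ i, θ k i * q t i) := fun k t =>
    mul_pos (hρpos k) (Real.exp_pos _)
  have hfnonneg : ∀ k t, 0 ≤ hfun k t := by
    intro k t; rw [hhfun]; exact div_nonneg (hnumpos k t).le (hdenpos t).le
  have hfle : ∀ k t, hfun k t ≤ 1 := by
    intro k t; rw [hhfun]
    rw [div_le_one (hdenpos t)]
    exact Finset.single_le_sum (f := fun k' => ρ k' * Real.exp (∑ i, θ k' i * q t i))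
      (fun k' _ => (hnumpos k' t).le) (Finset.mem_univ k)
  have hfsum : ∀ t, ∑ k, hfun k t = 1 := by
    intro t
    have : ∑ k, hfun k t = (∑ k, ρ k * Real.exp (∑ i, θ k i * q t i)) / den t := by
      rw [Finset.sum_div]; exact Finset.sum_congr rfl fun k _ => hhfun k t
    rw [this, div_self (hdenpos t).ne']
  -- measurability
  have hqi : ∀ i, Measurable fun t => q t i := fun i => (measurable_pi_apply i).comp hq
  have hfmeas : ∀ k, Measurable (hfun k) := by
    intro k
    have : hfun k = fun t => ρ k * Real.exp (∑ i, θ k i * q t i) / den t := by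
      funext t; exact hhfun k t
    rw [this]
    exact (measurable_const.mul ((Finset.measurable_sum _ fun i _ =>
        (measurable_const.mul (hqi i))).exp)).div
      (Finset.measurable_sum _ fun k' _ =>
        measurable_const.mul ((Finset.measurable_sum _ fun i _ =>
          (measurable_const.mul (hqi i))).exp))
  -- Gbar is finite
  have hGfin : IsFiniteMeasure Gbar := by
    constructor
    rw [hGbar]
    simp only [Measure.finset_sum_apply, Measure.smul_apply, smul_eq_mul,
      measure_univ, mul_one]
    exact ENNReal.sum_lt_top.2 fun k _ => ENNReal.ofReal_lt_top
  -- integrability of each q_i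
  have hqint : ∀ i, Integrable (fun t => q t i) Gbar := by
    intro i
    have hb : ∀ t, ‖q t i‖ ≤ ‖(1 : ℝ) + ∑ j, (q t j) ^ 2‖ := by
      intro t
      have h1 : (q t i) ^ 2 ≤ ∑ j, (q t j) ^ 2 :=
        Finset.single_le_sum (f := fun j => (q t j) ^ 2)
          (fun j _ => sq_nonneg _) (Finset.mem_univ i)
      have h2 : |q t i| ≤ 1 + (q t i) ^ 2 := by
        rcases le_or_gt (|q t i|) 1 with h | h
        · nlinarith [sq_nonneg (q t i)]
        · nlinarith [sq_abs (q t i)]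
      have h3 : (0:ℝ) ≤ 1 + ∑ j, (q t j) ^ 2 := by
        positivity
      rw [Real.norm_eq_abs, Real.norm_eq_abs, abs_of_nonneg h3]
      linarith
    exact Integrable.mono ((integrable_const 1).add hq2int)
      (hqi i).aestronglyMeasurable (Filter.Eventually.of_forall hb)
  -- integrability of the B-integrands
  have hintegrand : ∀ (k : Fin (m+1)) (s : Fin m) (i : Fin d),
      Integrable (fun t =>
        ((if k = s.succ then hfun k t else 0) - hfun k t * hfun s.succ t) * q t i) Gbar := by
    intro k s i
    refine Integrable.mono ((hqint i).const_mul 2) ?_ (Filter.Eventually.of_forall fun t => ?_)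
    · refine (((Measurable.sub ?_ ((hfmeas k).mul (hfmeas s.succ))).mul (hqi i))).aestronglyMeasurable
      exact Measurable.ite (by simp) (hfmeas k) measurable_const
    · simp only [Real.norm_eq_abs, abs_mul]
      have h1 : |(if k = s.succ then hfun k t else 0) - hfun k t * hfun s.succ t| ≤ 2 := by
        have := hfnonneg k t; have := hfle k t
        have := hfnonneg s.succ t; have := hfle s.succ t
        have hm1 : 0 ≤ hfun k t * hfun s.succ t := by positivity
        have hm2 : hfun k t * hfun s.succ t ≤ 1 := by nlinarith
        split <;> (rw [abs_le]; constructor <;> nlinarith)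
      rw [abs_two]
      exact mul_le_mul_of_nonneg_right h1 (abs_nonneg _)
  constructor
  · -- W v_k = B k.succ
    intro k
    funext x
    obtain ⟨r, i⟩ := x
    have hvk : ∀ x : Fin m × Fin d, v k x = if x = (k, (⟨0, hd⟩ : Fin d)) then 1 else 0 := by
      rintro ⟨s, j⟩
      rw [hv]
      congr 1
      simp [Prod.ext_iff]
    have hstep : W.mulVec (v k) (r, i) = W (r, i) (k, ⟨0, hd⟩) := by
      simp only [Matrix.mulVec, dotProduct, hvk, mul_ite, mul_one, mul_zero,
        Finset.sum_ite_eq', Finset.mem_univ, if_true]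
    rw [hstep, hW, hB]
    refine integral_congr_ae (Filter.Eventually.of_forall fun t => ?_)
    simp only [hq1, mul_one]
    by_cases h : r = k
    · subst h; simp [mul_comm]
    · have h' : ¬ (k.succ = r.succ) := fun hc => h (Fin.succ_injective _ hc).symm
      simp [h, h', mul_comm]
  · -- B 0 = -∑ B k.succ
    funext x
    obtain ⟨s, i⟩ := x
    simp only [Pi.neg_apply, Finset.sum_apply]
    rw [hB]
    have hsum : ∑ k : Fin m, B k.succ (s, i) =
        ∫ t, ∑ k : Fin m, ((if k.succ = s.succ then hfun k.succ t else 0)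
          - hfun k.succ t * hfun s.succ t) * q t i ∂Gbar := by
      calc ∑ k : Fin m, B k.succ (s, i)
          = ∑ k : Fin m, ∫ t, ((if k.succ = s.succ then hfun k.succ t else 0)
              - hfun k.succ t * hfun s.succ t) * q t i ∂Gbar :=
            Finset.sum_congr rfl fun k _ => hB k.succ s i
        _ = _ := (integral_finset_sum _ fun k _ => hintegrand k.succ s i).symm
    rw [hsum, ← integral_neg]
    refine integral_congr_ae (Filter.Eventually.of_forall fun t => ?_)
    have h0 : ¬ ((0 : Fin (m+1)) = s.succ) := (Fin.succ_ne_zero s).symm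
    have e1 : ∑ k : Fin m, ((if k.succ = s.succ then hfun k.succ t else 0)
        - hfun k.succ t * hfun s.succ t) * q t i =
        (hfun s.succ t - (1 - hfun 0 t) * hfun s.succ t) * q t i := by
      rw [← Finset.sum_mul]
      congr 1
      rw [Finset.sum_sub_distrib]
      congr 1
      · have hiff : ∀ k : Fin m, (if k.succ = s.succ then hfun k.succ t else 0)
            = if k = s then hfun k.succ t else 0 := fun k => by
          simp [Fin.succ_inj]
        simp only [hiff]
        simp
      · rw [← Finset.sum_mul]
        have hrest : ∑ k : Fin m, hfun k.succ t = 1 - hfun 0 t := by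
          have hh := hfsum t
          rw [Fin.sum_univ_succ] at hh
          linarith
        rw [hrest]
    show ((if (0 : Fin (m+1)) = s.succ then hfun 0 t else 0)
        - hfun 0 t * hfun s.succ t) * q t i = -∑ k : Fin m,
        ((if k.succ = s.succ then hfun k.succ t else 0)
          - hfun k.succ t * hfun s.succ t) * q t i
    rw [e1, if_neg h0]
    ring
end

section
/- Under the density ratio model (G_0, …, G_m Borel probability measures on ℝ; q : ℝ → ℝ^d Borel measurable with first component q_1 ≡ 1; θ_0 = 0, θ_1, …, θ_m ∈ ℝ^d; G_k with density exp(θ_kᵀ q(·)) with respect to G_0; ρ_0, …, ρ_m > 0, Σ ρ_k = 1; h = Σ_k ρ_k exp(θ_kᵀ q), h_k = ρ_k exp(θ_kᵀ q)/h; Ḡ = Σ_k ρ_k G_k; ∫ ‖q‖² dḠ < ∞), let W be the md × md block matrix with blocks W_{rs} = ∫ (δ_{rs} h_r − h_r h_s) q qᵀ dḠ (1 ≤ r, s ≤ m), assumed invertible, and let B_k ∈ ℝ^{md} have sth block B_{k,s} = ∫ (δ_{ks} h_k − h_k h_s) q dḠ for 0 ≤ k ≤ m. Let S be the md × md block matrix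 with (r,s) block (ρ_r^{-1} δ_{rs} + ρ_0^{-1}) e_1 e_1ᵀ, where e_1 = (1,0,…,0)ᵀ ∈ ℝ^d. Then Σ_{k=0}^m ρ_k^{-1} (W^{-1} B_k)(W^{-1} B_k)ᵀ = S. -/
open MeasureTheory

set_option maxHeartbeats 2000000 in
/-- in the density ratio model with `q₁ ≡ 1`, `∫ ‖q‖² dḠ < ∞`, and `W`
invertible, `Σ_{k=0}^m ρ_k⁻¹ (W⁻¹ B_k)(W⁻¹ B_k)ᵀ = S`, where `S` is the block matrix
with `(r,s)` block `(ρ_r⁻¹ δ_{rs} + ρ_0⁻¹) e₁ e₁ᵀ`. -/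
theorem drm_S_identity (m d : ℕ) (hm : 1 ≤ m) (hd : 1 ≤ d)
    (G : Fin (m + 1) → Measure ℝ) [∀ k, IsProbabilityMeasure (G k)]
    (q : ℝ → Fin d → ℝ) (hq : Measurable q)
    (hq1 : ∀ t, q t ⟨0, hd⟩ = 1)
    (θ : Fin (m + 1) → Fin d → ℝ) (hθ0 : θ 0 = 0)
    (hG : ∀ k, G k =
      (G 0).withDensity fun t => ENNReal.ofReal (Real.exp (∑ i, θ k i * q t i)))
    (ρ : Fin (m + 1) → ℝ) (hρpos : ∀ k, 0 < ρ k) (hρsum : ∑ k, ρ k = 1)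
    (hfun : Fin (m + 1) → ℝ → ℝ)
    (hhfun : ∀ k t, hfun k t =
      ρ k * Real.exp (∑ i, θ k i * q t i) /
        ∑ k', ρ k' * Real.exp (∑ i, θ k' i * q t i))
    (Gbar : Measure ℝ) (hGbar : Gbar = ∑ k, ENNReal.ofReal (ρ k) • G k)
    (hq2int : Integrable (fun t => ∑ i, (q t i) ^ 2) Gbar)
    (W : Matrix (Fin m × Fin d) (Fin m × Fin d) ℝ)
    (hW : ∀ (r s : Fin m) (i j : Fin d), W (r, i) (s, j) =
      ∫ t, ((if r = s then hfun r.succ t else 0) - hfun r.succ t * hfun s.succ t) *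
        (q t i * q t j) ∂Gbar)
    (hWinv : IsUnit W.det)
    (B : Fin (m + 1) → Fin m × Fin d → ℝ)
    (hB : ∀ (k : Fin (m + 1)) (s : Fin m) (i : Fin d), B k (s, i) =
      ∫ t, ((if k = s.succ then hfun k t else 0) - hfun k t * hfun s.succ t) * q t i ∂Gbar)
    (S : Matrix (Fin m × Fin d) (Fin m × Fin d) ℝ)
    (hS : ∀ (r s : Fin m) (i j : Fin d), S (r, i) (s, j) =
      ((ρ r.succ)⁻¹ * (if r = s then 1 else 0) + (ρ 0)⁻¹) *
        ((if i = (⟨0, hd⟩ : Fin d) then (1 : ℝ) else 0) *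
          (if j = (⟨0, hd⟩ : Fin d) then (1 : ℝ) else 0))) :
    ∑ k, (ρ k)⁻¹ • Matrix.vecMulVec (W⁻¹.mulVec (B k)) (W⁻¹.mulVec (B k)) = S := by
  classical
  set e0 : Fin d := ⟨0, hd⟩ with he0
  -- positivity of the denominator
  have hDpos : ∀ t, 0 < ∑ k', ρ k' * Real.exp (∑ i, θ k' i * q t i) := fun t =>
    Finset.sum_pos (fun k _ => mul_pos (hρpos k) (Real.exp_pos _)) ⟨0, Finset.mem_univ 0⟩
  have hh0 : ∀ k t, 0 ≤ hfun k t := by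
    intro k t
    rw [hhfun]
    exact div_nonneg (le_of_lt (mul_pos (hρpos k) (Real.exp_pos _))) (le_of_lt (hDpos t))
  have hh1 : ∀ k t, hfun k t ≤ 1 := by
    intro k t
    rw [hhfun, div_le_one (hDpos t)]
    exact Finset.single_le_sum (f := fun k' => ρ k' * Real.exp (∑ i, θ k' i * q t i))
      (fun k' _ => le_of_lt (mul_pos (hρpos k') (Real.exp_pos _))) (Finset.mem_univ k)
  have hhsum : ∀ t, ∑ k, hfun k t = 1 := by
    intro t
    simp only [hhfun]
    rw [← Finset.sum_div, div_self (ne_of_gt (hDpos t))]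
  have hhmeas : ∀ k, Measurable (hfun k) := by
    intro k
    have hrw : hfun k = fun t => (ρ k * Real.exp (∑ i, θ k i * q t i)) /
        ∑ k', ρ k' * Real.exp (∑ i, θ k' i * q t i) := funext fun t => hhfun k t
    rw [hrw]
    have hexp : ∀ k' : Fin (m + 1),
        Measurable fun t => ρ k' * Real.exp (∑ i, θ k' i * q t i) := fun k' =>
      (Real.measurable_exp.comp (Finset.measurable_sum _ fun i _ =>
        ((measurable_pi_apply i).comp hq).const_mul _)).const_mul _
    exact (hexp k).div (Finset.measurable_sum _ fun k' _ => hexp k')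
  -- Gbar is a finite measure
  have hGfin : IsFiniteMeasure Gbar := by
    constructor
    rw [hGbar]
    rw [Measure.finset_sum_apply]
    refine ENNReal.sum_lt_top.mpr fun k _ => ?_
    simp [Measure.smul_apply, ENNReal.ofReal_lt_top, ENNReal.mul_lt_top,
      measure_lt_top (G k) Set.univ]
  -- integrability of each coordinate of q
  have hqi_int : ∀ i, Integrable (fun t => q t i) Gbar := by
    intro i
    have hg : Integrable (fun t => 1 + ∑ j, (q t j) ^ 2) Gbar := (integrable_const 1).add hq2int
    refine hg.mono' (((measurable_pi_apply i).comp hq).aestronglyMeasurable) ?_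
    filter_upwards with t
    have h1 : |q t i| ≤ 1 + (q t i) ^ 2 := by nlinarith [abs_nonneg (q t i), sq_abs (q t i)]
    have h2 : (q t i) ^ 2 ≤ ∑ j, (q t j) ^ 2 :=
      Finset.single_le_sum (f := fun j => (q t j) ^ 2) (fun j _ => sq_nonneg _)
        (Finset.mem_univ i)
    simpa [Real.norm_eq_abs] using h1.trans (by linarith)
  -- integrability of the integrands appearing in W and B
  have hint : ∀ (c : ℝ) (k l : Fin (m + 1)) (i : Fin d),
      Integrable (fun t => (c * hfun k t - hfun k t * hfun l t) * q t i) Gbar := by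
    intro c k l i
    refine ((hqi_int i).norm.const_mul (|c| + 1)).mono'
      ((((hhmeas k).const_mul c).sub ((hhmeas k).mul (hhmeas l))).mul
        ((measurable_pi_apply i).comp hq)).aestronglyMeasurable ?_
    filter_upwards with t
    have h1 := hh0 k t; have h2 := hh1 k t; have h3 := hh0 l t; have h4 := hh1 l t
    have : |c * hfun k t - hfun k t * hfun l t| ≤ |c| + 1 := by
      rw [abs_sub_le_iff]
      constructor <;> nlinarith [abs_nonneg c, le_abs_self c, neg_abs_le c]
    rw [Real.norm_eq_abs, abs_mul]
    have := abs_nonneg (q t i)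
    calc |c * hfun k t - hfun k t * hfun l t| * |q t i| ≤ (|c| + 1) * |q t i| := by nlinarith
    _ = (|c| + 1) * ‖q t i‖ := by rw [Real.norm_eq_abs]
  -- the key identity : W * u k = B k
  set u : Fin (m + 1) → Fin m × Fin d → ℝ := fun k p =>
    ((if k = p.1.succ then (1 : ℝ) else 0) - (if k = 0 then 1 else 0)) *
      (if p.2 = e0 then 1 else 0) with hu
  have key : ∀ k : Fin (m + 1), W.mulVec (u k) = B k := by
    intro k
    funext p
    obtain ⟨a, i⟩ := p
    rw [Matrix.mulVec]
    show (∑ p : Fin m × Fin d, W (a, i) p * u k p) = B k (a, i)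
    rw [Fintype.sum_prod_type]
    have hcol : ∀ b : Fin m, (∑ j : Fin d, W (a, i) (b, j) * u k (b, j)) =
        W (a, i) (b, e0) * ((if k = b.succ then (1 : ℝ) else 0) - (if k = 0 then 1 else 0)) := by
      intro b
      simp only [hu, mul_ite, mul_one, mul_zero]
      rw [Finset.sum_ite_eq' Finset.univ e0
        (fun j => W (a, i) (b, j) * ((if k = b.succ then (1 : ℝ) else 0) - (if k = 0 then 1 else 0)))]
      simp
    simp only [hcol]
    rcases Fin.eq_zero_or_eq_succ k with hk | ⟨s, hk⟩
    · -- k = 0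
      subst hk
      have hTrue : ∀ c : Fin m, W (a, i) (c, e0) *
          ((if (0 : Fin (m + 1)) = c.succ then (1 : ℝ) else 0)
            - if (0 : Fin (m + 1)) = 0 then (1 : ℝ) else 0)
          = -W (a, i) (c, e0) := by
        intro c
        rw [if_neg (fun h => Fin.succ_ne_zero c h.symm), if_pos rfl]
        ring
      rw [Finset.sum_congr rfl fun c _ => hTrue c, Finset.sum_neg_distrib]
      have hWrw : ∀ b : Fin m, W (a, i) (b, e0) =
          ∫ t, ((if a = b then (1:ℝ) else 0) * hfun a.succ t
            - hfun a.succ t * hfun b.succ t) * q t i ∂Gbar := by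
        intro b
        rw [hW]
        congr 1
        funext t
        rw [hq1]
        by_cases h : a = b <;> simp [h] <;> ring
      have hsum : (∑ b : Fin m, W (a, i) (b, e0)) =
          ∫ t, hfun 0 t * hfun a.succ t * q t i ∂Gbar := by
        simp only [hWrw]
        rw [← integral_finset_sum _ (fun b _ => hint _ _ _ _)]
        congr 1
        funext t
        rw [← Finset.sum_mul]
        have hs : ∑ b : Fin m, hfun b.succ t = 1 - hfun 0 t := by
          have := hhsum t
          rw [Fin.sum_univ_succ] at this
          linarith
        rw [Finset.sum_sub_distrib, ← Finset.mul_sum, hs]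
        have : (∑ b : Fin m, (if a = b then (1:ℝ) else 0) * hfun a.succ t) = hfun a.succ t := by
          rw [← Finset.sum_mul]
          simp
        rw [this]
        ring
      rw [hsum, hB]
      rw [← integral_neg]
      congr 1
      funext t
      simp only [if_neg (fun h => (Fin.succ_ne_zero a) h.symm : ¬(0 : Fin (m+1)) = a.succ)]
      ring
    · -- k = s.succ
      subst hk
      have hFalse : ∀ c : Fin m, W (a, i) (c, e0) *
          ((if s.succ = c.succ then (1 : ℝ) else 0)
            - if s.succ = (0 : Fin (m + 1)) then (1 : ℝ) else 0)
          = if s = c then W (a, i) (c, e0) else 0 := by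
        intro c
        rw [if_neg (Fin.succ_ne_zero s)]
        by_cases h : s = c
        · subst h; rw [if_pos rfl, if_pos rfl]; ring
        · rw [if_neg (fun hh => h (Fin.succ_inj.mp hh)), if_neg h]; ring
      rw [Finset.sum_congr rfl fun c _ => hFalse c,
        Finset.sum_ite_eq Finset.univ s (fun c => W (a, i) (c, e0)),
        if_pos (Finset.mem_univ s), hW, hB]
      congr 1
      funext t
      rw [hq1]
      by_cases h : a = s
      · subst h
        rw [if_pos rfl, if_pos rfl]
        ring
      · have h' : ¬ s.succ = a.succ := fun hh => h (Fin.succ_inj.mp hh).symm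
        rw [if_neg h, if_neg h']
        ring
  have hWB : ∀ k, W⁻¹.mulVec (B k) = u k := by
    intro k
    rw [← key k, Matrix.mulVec_mulVec, Matrix.nonsing_inv_mul W hWinv, Matrix.one_mulVec]
  -- final computation
  have hscal : ∀ x y : Fin m,
      (∑ k : Fin (m + 1), (ρ k)⁻¹ *
        ((if k = x.succ then (1 : ℝ) else 0) - (if k = 0 then 1 else 0)) *
        ((if k = y.succ then (1 : ℝ) else 0) - (if k = 0 then 1 else 0))) =
      (ρ x.succ)⁻¹ * (if x = y then 1 else 0) + (ρ 0)⁻¹ := by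
    intro x y
    rw [Fin.sum_univ_succ]
    rw [if_neg (fun h => Fin.succ_ne_zero x h.symm : ¬(0 : Fin (m + 1)) = x.succ),
      if_neg (fun h => Fin.succ_ne_zero y h.symm : ¬(0 : Fin (m + 1)) = y.succ), if_pos rfl]
    have hterm : ∀ c : Fin m,
        (ρ c.succ)⁻¹ * ((if c.succ = x.succ then (1 : ℝ) else 0) - (if c.succ = 0 then 1 else 0)) *
          ((if c.succ = y.succ then (1 : ℝ) else 0) - (if c.succ = 0 then 1 else 0)) =
        if x = c then (if c = y then (ρ c.succ)⁻¹ else 0) else 0 := by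
      intro c
      rw [if_neg (Fin.succ_ne_zero c)]
      by_cases h1 : c = x <;> by_cases h2 : c = y
      · subst h1; subst h2; simp
      · subst h1; rw [if_pos rfl, if_neg (fun hh => h2 (Fin.succ_inj.mp hh)), if_pos rfl,
          if_neg h2]; ring
      · subst h2; rw [if_neg (fun hh => h1 (Fin.succ_inj.mp hh)), if_pos rfl,
          if_neg (fun hh => h1 hh.symm)]; ring
      · rw [if_neg (fun hh => h1 (Fin.succ_inj.mp hh)),
          if_neg (fun hh => h2 (Fin.succ_inj.mp hh)), if_neg (fun hh => h1 hh.symm)]; ring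
    rw [Finset.sum_congr rfl fun c _ => hterm c,
      Finset.sum_ite_eq Finset.univ x (fun c => if c = y then (ρ c.succ)⁻¹ else 0),
      if_pos (Finset.mem_univ x)]
    by_cases h : x = y
    · subst h; rw [if_pos rfl, if_pos rfl]; ring
    · rw [if_neg h, if_neg h]; ring
  funext p p'
  obtain ⟨a, i⟩ := p
  obtain ⟨b, j⟩ := p'
  rw [Matrix.sum_apply, hS]
  have hentry : ∀ k : Fin (m + 1),
      ((ρ k)⁻¹ • Matrix.vecMulVec (W⁻¹.mulVec (B k)) (W⁻¹.mulVec (B k))) (a, i) (b, j) =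
      ((ρ k)⁻¹ * ((if k = a.succ then (1 : ℝ) else 0) - (if k = 0 then 1 else 0)) *
        ((if k = b.succ then (1 : ℝ) else 0) - (if k = 0 then 1 else 0))) *
      ((if i = e0 then (1 : ℝ) else 0) * (if j = e0 then 1 else 0)) := by
    intro k
    rw [Matrix.smul_apply, Matrix.vecMulVec_apply, hWB, hu]
    show (ρ k)⁻¹ * _ = _
    ring
  rw [Finset.sum_congr rfl fun k _ => hentry k, ← Finset.sum_mul, hscal a b]
end

section
/- Under the density ratio model (G_0, …, G_m Borel probability measures on ℝ; q : ℝ → ℝ^d Borel measurable with first component q_1 ≡ 1; θ_0 = 0, θ_1, …, θ_m ∈ ℝ^d; G_k with density exp(θ_kᵀ q(·)) with respect to G_0; ρ_0, …, ρ_m > 0, Σ ρ_k = 1; h = Σ_k ρ_k exp(θ_kᵀ q), h_k = ρ_k exp(θ_kᵀ q)/h; Ḡ = Σ_k ρ_k G_k; ∫ ‖q‖² dḠ < ∞), let W be the md × md block matrix with blocks W_{rs} = ∫ (δ_{rs} h_r − h_r h_s) q qᵀ dḠ (1 ≤ r, s ≤ m), assumed invertible. For 0 ≤ r ≤ m and x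 ∈ ℝ let B_r(x) ∈ ℝ^{md} have sth block B_{r,s}(x) = ∫_{(−∞,x]} (δ_{rs} h_r − h_r h_s) q dḠ (1 ≤ s ≤ m), write B_k = B_k(+∞), and let c_{rk}(x) = ∫_{(−∞,x]} h_r h_k dḠ. Then for every 0 ≤ r, k ≤ m and every x ∈ ℝ: B_r(x)ᵀ W^{-1} B_k = δ_{rk} ρ_r G_r((−∞,x]) − c_{rk}(x). In particular, for r ≥ 1, c_{r0}(x) + B_r(x)ᵀ W^{-1} B_0 = 0. -/
/-!
The kernel `κ_{kj} = δ_{kj} h_k - h_k h_j` has vanishing row sums, because `∑_j h_j = 1`.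
Together with `q_1 ≡ 1` this makes `B_k`, for `k ≥ 1`, the column of `W` indexed by `(k, 1)`, and
`B_0` minus the sum of these columns, so `W⁻¹ B_k` is an explicit vector of entries `0, ±1`.
Pairing `B_r(x)` with it and using the vanishing row sums once more leaves
`∫_{(-∞,x]} κ_{rk} dḠ`, and `∫_{(-∞,x]} h_r dḠ = ρ_r G_r((-∞,x])` because `Ḡ` has density
`∑_k ρ_k exp(θ_kᵀ q)` with respect to `G_0`.
-/

open MeasureTheory
open scoped Matrix

namespace DensityRatioModel

section Algebra

variable {R : Type*} [CommRing R] {m d : ℕ}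

def blockCoeff (k : Fin (m + 1)) (s : Fin m) : R :=
  (if k = s.succ then 1 else 0) - if k = 0 then 1 else 0

theorem sum_blockCoeff_mul {f : Fin (m + 1) → R} (hf : ∑ j, f j = 0) (k : Fin (m + 1)) :
    ∑ s, blockCoeff k s * f s.succ = f k := by
  rw [Fin.sum_univ_succ] at hf
  cases k using Fin.cases with
  | zero =>
    simp [blockCoeff, (Fin.succ_ne_zero _).symm]
    linear_combination -hf
  | succ k => simp [blockCoeff, Fin.succ_inj, Fin.succ_ne_zero]

/-- `W⁻¹ B_k`: as `q_{i₀} ≡ 1`, `B_k` is the `(k - 1, i₀)` column of `W` for `k ≥ 1`, and minus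
the sum of the columns `(s, i₀)` for `k = 0`. -/
def solVec (i₀ : Fin d) (k : Fin (m + 1)) (a : Fin m × Fin d) : R :=
  if a.2 = i₀ then blockCoeff k a.1 else 0

theorem sum_mul_solVec (v : Fin m × Fin d → R) (i₀ : Fin d) (k : Fin (m + 1)) :
    ∑ a, v a * solVec i₀ k a = ∑ s, blockCoeff k s * v (s, i₀) := by
  simp [solVec, Fintype.sum_prod_type, mul_comm]

end Algebra

section Kernel

variable {ι α : Type*} [DecidableEq ι]

def kernel (h : ι → α → ℝ) (k j : ι) (t : α) : ℝ :=
  (if k = j then h k t else 0) - h k t * h j t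

variable {h : ι → α → ℝ}

theorem kernel_comm (k j : ι) (t : α) : kernel h k j t = kernel h j k t := by
  by_cases hkj : k = j
  · rw [hkj]
  · simp [kernel, hkj, Ne.symm hkj, mul_comm]

theorem sum_kernel [Fintype ι] {t : α} (hsum : ∑ j, h j t = 1) (k : ι) :
    ∑ j, kernel h k j t = 0 := by
  simp [kernel, Finset.sum_sub_distrib, ← Finset.mul_sum, hsum]

theorem abs_kernel_le_one {t : α} (h0 : ∀ j, 0 ≤ h j t) (h1 : ∀ j, h j t ≤ 1) (k j : ι) :
    |kernel h k j t| ≤ 1 := by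
  have := h0 k; have := h0 j; have := h1 k; have := h1 j
  rw [kernel, abs_le]
  split_ifs with hkj
  · subst hkj; constructor <;> nlinarith
  · constructor <;> nlinarith

variable [MeasurableSpace α]

theorem measurable_kernel (hm : ∀ j, Measurable (h j)) (k j : ι) :
    Measurable (kernel h k j) := by
  unfold kernel
  split_ifs <;> fun_prop

theorem integrable_kernel_mul {μ : Measure α} (hm : ∀ j, Measurable (h j))
    (h0 : ∀ j t, 0 ≤ h j t) (h1 : ∀ j t, h j t ≤ 1) {g : α → ℝ} (hg : Integrable g μ)
    (k j : ι) : Integrable (fun t => kernel h k j t * g t) μ :=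
  hg.bdd_mul (measurable_kernel hm k j).aestronglyMeasurable
    (ae_of_all _ fun t => abs_kernel_le_one (h0 · t) (h1 · t) k j)

end Kernel

section Weight

variable {ι α : Type*} [Fintype ι] {ρ : ι → ℝ} {η : ι → α → ℝ}

noncomputable def weight (ρ : ι → ℝ) (η : ι → α → ℝ) (k : ι) (t : α) : ℝ :=
  ρ k * Real.exp (η k t) / ∑ j, ρ j * Real.exp (η j t)

theorem sum_mul_exp_pos [Nonempty ι] (hρ : ∀ k, 0 < ρ k) (t : α) :
    0 < ∑ j, ρ j * Real.exp (η j t) :=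
  Finset.sum_pos (fun k _ => mul_pos (hρ k) (Real.exp_pos _)) Finset.univ_nonempty

theorem weight_nonneg (hρ : ∀ k, 0 ≤ ρ k) (k : ι) (t : α) : 0 ≤ weight ρ η k t := by
  have := hρ k
  unfold weight
  exact div_nonneg (by positivity) (Finset.sum_nonneg fun j _ => by have := hρ j; positivity)

theorem sum_weight [Nonempty ι] (hρ : ∀ k, 0 < ρ k) (t : α) : ∑ k, weight ρ η k t = 1 := by
  simp only [weight, ← Finset.sum_div]
  exact div_self (sum_mul_exp_pos hρ t).ne'

theorem weight_le_one [Nonempty ι] (hρ : ∀ k, 0 < ρ k) (k : ι) (t : α) :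
    weight ρ η k t ≤ 1 :=
  sum_weight (η := η) hρ t ▸ Finset.single_le_sum
    (fun j _ => weight_nonneg (fun i => (hρ i).le) j t) (Finset.mem_univ k)

theorem sum_mul_exp_mul_weight [Nonempty ι] (hρ : ∀ k, 0 < ρ k) (k : ι) (t : α) :
    (∑ j, ρ j * Real.exp (η j t)) * weight ρ η k t = ρ k * Real.exp (η k t) :=
  mul_div_cancel₀ _ (sum_mul_exp_pos hρ t).ne'

theorem measurable_weight [MeasurableSpace α] (hη : ∀ k, Measurable (η k)) (k : ι) :
    Measurable (weight ρ η k) := by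
  unfold weight
  fun_prop

end Weight

section Measure

open scoped ENNReal

variable {ι α : Type*} [MeasurableSpace α]

theorem sum_smul_withDensity [Fintype ι] (μ : Measure α) (c : ι → ℝ≥0∞) {f : ι → α → ℝ≥0∞}
    (hf : ∀ k, Measurable (f k)) :
    ∑ k, c k • μ.withDensity (f k) = μ.withDensity fun t => ∑ k, c k * f k t := by
  ext A hA
  simp only [Measure.finsetSum_apply, Measure.smul_apply, smul_eq_mul, withDensity_apply _ hA]
  rw [lintegral_finsetSum _ fun k _ => (hf k).const_mul (c k)]
  simp_rw [lintegral_const_mul _ (hf _)]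

theorem isFiniteMeasure_sum_ofReal_smul [Fintype ι] (ρ : ι → ℝ) (G : ι → Measure α)
    [∀ k, IsFiniteMeasure (G k)] : IsFiniteMeasure (∑ k, ENNReal.ofReal (ρ k) • G k) :=
  have (k : ι) := (G k).smul_finite (ENNReal.ofReal_ne_top (r := ρ k))
  inferInstance

theorem setIntegral_weight [Fintype ι] [Nonempty ι] {ρ : ι → ℝ} {η : ι → α → ℝ}
    (hρ : ∀ k, 0 < ρ k) (hη : ∀ k, Measurable (η k)) (μ : Measure α) {G : ι → Measure α}
    (hG : ∀ k, G k = μ.withDensity fun t => ENNReal.ofReal (Real.exp (η k t)))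
    (r : ι) {s : Set α} (hs : MeasurableSet s) :
    ∫ t in s, weight ρ η r t ∂(∑ k, ENNReal.ofReal (ρ k) • G k) = ρ r * (G r s).toReal := by
  have hexp : ∀ k, Measurable fun t => ENNReal.ofReal (Real.exp (η k t)) := by fun_prop
  have hmix : ∑ k, ENNReal.ofReal (ρ k) • G k =
      μ.withDensity fun t => ENNReal.ofReal (∑ j, ρ j * Real.exp (η j t)) := by
    simp_rw [hG, sum_smul_withDensity μ _ hexp]
    congr with t
    rw [ENNReal.ofReal_sum_of_nonneg fun j _ => (mul_pos (hρ j) (Real.exp_pos _)).le]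
    simp_rw [ENNReal.ofReal_mul (hρ _).le]
  rw [integral_eq_lintegral_of_nonneg_ae (ae_of_all _ (weight_nonneg (fun k => (hρ k).le) r))
      (measurable_weight hη r).aestronglyMeasurable, hmix,
    setLIntegral_withDensity_eq_setLIntegral_mul _ (by fun_prop)
      (measurable_weight hη r).ennreal_ofReal hs]
  simp_rw [Pi.mul_apply, ← ENNReal.ofReal_mul (sum_mul_exp_pos hρ _).le,
    sum_mul_exp_mul_weight hρ, ENNReal.ofReal_mul (hρ r).le]
  rw [lintegral_const_mul _ (hexp r), ENNReal.toReal_mul, ENNReal.toReal_ofReal (hρ r).le, hG r,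
    withDensity_apply _ hs]

theorem setIntegral_kernel_weight [Fintype ι] [Nonempty ι] [DecidableEq ι] {ρ : ι → ℝ}
    {η : ι → α → ℝ} (hρ : ∀ k, 0 < ρ k) (hη : ∀ k, Measurable (η k)) (μ : Measure α)
    {G : ι → Measure α} [∀ k, IsFiniteMeasure (G k)]
    (hG : ∀ k, G k = μ.withDensity fun t => ENNReal.ofReal (Real.exp (η k t)))
    (r k : ι) {s : Set α} (hs : MeasurableSet s) :
    ∫ t in s, kernel (weight ρ η) r k t ∂(∑ k, ENNReal.ofReal (ρ k) • G k) =
      (if r = k then ρ r * (G r s).toReal else 0) -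
        ∫ t in s, weight ρ η r t * weight ρ η k t ∂(∑ k, ENNReal.ofReal (ρ k) • G k) := by
  have := isFiniteMeasure_sum_ofReal_smul ρ G
  have h0 := weight_nonneg (η := η) fun k => (hρ k).le
  have h1 := weight_le_one (η := η) hρ
  have hr : Integrable (weight ρ η r) ((∑ k, ENNReal.ofReal (ρ k) • G k).restrict s) :=
    .of_bound (measurable_weight hη r).aestronglyMeasurable 1 (ae_of_all _ fun t => by
      rw [Real.norm_of_nonneg (h0 r t)]; exact h1 r t)
  have hrk : Integrable (fun t => weight ρ η r t * weight ρ η k t)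
      ((∑ k, ENNReal.ofReal (ρ k) • G k).restrict s) :=
    hr.mul_bdd (measurable_weight hη k).aestronglyMeasurable (ae_of_all _ fun t => by
      rw [Real.norm_of_nonneg (h0 k t)]; exact h1 k t)
  by_cases hrk_eq : r = k
  · subst hrk_eq
    simp only [kernel, if_true]
    rw [integral_sub hr hrk, setIntegral_weight hρ hη μ hG r hs]
  · simp [kernel, hrk_eq, integral_neg]

theorem integrable_apply_of_integrable_sum_sq [Fintype ι] {μ : Measure α} [IsFiniteMeasure μ]
    {q : α → ι → ℝ} (hq : Measurable q) (hq2 : Integrable (fun t => ∑ i, q t i ^ 2) μ) (i : ι) :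
    Integrable (fun t => q t i) μ := by
  have hqi : AEStronglyMeasurable (fun t => q t i) μ :=
    (measurable_pi_iff.1 hq i).aestronglyMeasurable
  refine ((memLp_two_iff_integrable_sq hqi).2 ?_).integrable one_le_two
  refine hq2.mono' (hqi.pow 2) (ae_of_all _ fun t => ?_)
  rw [Real.norm_of_nonneg (sq_nonneg _)]
  exact Finset.single_le_sum (f := fun j => q t j ^ 2) (fun j _ => sq_nonneg _) (Finset.mem_univ i)

end Measure

section Identity

variable {α : Type*} [MeasurableSpace α] {m d : ℕ} {h : Fin (m + 1) → α → ℝ}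

theorem sum_mul_solVec_eq_integral_kernel {μ : Measure α} {g : α → ℝ} {i₀ : Fin d}
    (hsum : ∀ t, ∑ j, h j t = 1) {j : Fin (m + 1)}
    (hint : ∀ j', Integrable (fun t => kernel h j j' t * g t) μ) {v : Fin m × Fin d → ℝ}
    (hv : ∀ s, v (s, i₀) = ∫ t, kernel h j s.succ t * g t ∂μ) (k : Fin (m + 1)) :
    ∑ a, v a * solVec i₀ k a = ∫ t, kernel h j k t * g t ∂μ := by
  simp only [sum_mul_solVec, hv, ← integral_const_mul]
  rw [← integral_finsetSum _ fun s _ => (hint s.succ).const_mul _]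
  refine integral_congr_ae (ae_of_all _ fun t => ?_)
  simp only [← mul_assoc, ← Finset.sum_mul, sum_blockCoeff_mul (sum_kernel (hsum t) j) k]

theorem mulVec_solVec {μ : Measure α} {q : α → Fin d → ℝ} {i₀ : Fin d} (hq1 : ∀ t, q t i₀ = 1)
    (hsum : ∀ t, ∑ j, h j t = 1)
    (hint : ∀ j j' i, Integrable (fun t => kernel h j j' t * q t i) μ)
    {W : Matrix (Fin m × Fin d) (Fin m × Fin d) ℝ}
    (hW : ∀ r s i j, W (r, i) (s, j) = ∫ t, kernel h r.succ s.succ t * (q t i * q t j) ∂μ)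
    (k : Fin (m + 1)) :
    W *ᵥ solVec i₀ k = fun a => ∫ t, kernel h k a.1.succ t * q t a.2 ∂μ := by
  ext ⟨s, i⟩
  refine (sum_mul_solVec_eq_integral_kernel (v := W (s, i)) hsum (hint s.succ · i)
    (fun s' => ?_) k).trans ?_
  · simp [hW, hq1]
  · simp_rw [kernel_comm k]

end Identity

end DensityRatioModel

open DensityRatioModel

theorem drm_B_Winv_B_identity_general (m d : ℕ) (hd : 1 ≤ d)
    (G : Fin (m + 1) → Measure ℝ) [∀ k, IsProbabilityMeasure (G k)]
    (q : ℝ → Fin d → ℝ) (hq : Measurable q)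
    (hq1 : ∀ t, q t ⟨0, hd⟩ = 1)
    (θ : Fin (m + 1) → Fin d → ℝ)
    (hG : ∀ k, G k =
      (G 0).withDensity fun t => ENNReal.ofReal (Real.exp (∑ i, θ k i * q t i)))
    (ρ : Fin (m + 1) → ℝ) (hρpos : ∀ k, 0 < ρ k)
    (hfun : Fin (m + 1) → ℝ → ℝ)
    (hhfun : ∀ k t, hfun k t =
      ρ k * Real.exp (∑ i, θ k i * q t i) /
        ∑ k', ρ k' * Real.exp (∑ i, θ k' i * q t i))
    (Gbar : Measure ℝ) (hGbar : Gbar = ∑ k, ENNReal.ofReal (ρ k) • G k)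
    (hq2int : Integrable (fun t => ∑ i, (q t i) ^ 2) Gbar)
    (W : Matrix (Fin m × Fin d) (Fin m × Fin d) ℝ)
    (hW : ∀ (r s : Fin m) (i j : Fin d), W (r, i) (s, j) =
      ∫ t, ((if r = s then hfun r.succ t else 0) - hfun r.succ t * hfun s.succ t) *
        (q t i * q t j) ∂Gbar)
    (hWinv : IsUnit W.det)
    (B : Fin (m + 1) → ℝ → Fin m × Fin d → ℝ)
    (hB : ∀ (r : Fin (m + 1)) (x : ℝ) (s : Fin m) (i : Fin d), B r x (s, i) =
      ∫ t in Set.Iic x,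
        ((if r = s.succ then hfun r t else 0) - hfun r t * hfun s.succ t) * q t i ∂Gbar)
    (Bfull : Fin (m + 1) → Fin m × Fin d → ℝ)
    (hBfull : ∀ (k : Fin (m + 1)) (s : Fin m) (i : Fin d), Bfull k (s, i) =
      ∫ t, ((if k = s.succ then hfun k t else 0) - hfun k t * hfun s.succ t) * q t i ∂Gbar) :
    (∀ (r k : Fin (m + 1)) (x : ℝ),
      ∑ a : Fin m × Fin d, B r x a * (W⁻¹).mulVec (Bfull k) a =
        (if r = k then ρ r * (G r (Set.Iic x)).toReal else 0) -
          ∫ t in Set.Iic x, hfun r t * hfun k t ∂Gbar) ∧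
    (∀ (r : Fin m) (x : ℝ),
      (∫ t in Set.Iic x, hfun r.succ t * hfun 0 t ∂Gbar) +
        ∑ a : Fin m × Fin d, B r.succ x a * (W⁻¹).mulVec (Bfull 0) a = 0) := by
  set η : Fin (m + 1) → ℝ → ℝ := fun k t => ∑ i, θ k i * q t i
  have hη : ∀ k, Measurable (η k) := fun k => by fun_prop
  obtain rfl : hfun = weight ρ η := funext₂ hhfun
  have : IsFiniteMeasure Gbar := hGbar ▸ isFiniteMeasure_sum_ofReal_smul ρ G
  have hsum := sum_weight (η := η) hρpos
  have hint : ∀ j j' i, Integrable (fun t => kernel (weight ρ η) j j' t * q t i) Gbar :=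
    fun j j' i => integrable_kernel_mul (measurable_weight hη) (weight_nonneg (hρpos · |>.le))
      (weight_le_one hρpos) (integrable_apply_of_integrable_sum_sq hq hq2int i) j j'
  have hsol (k : Fin (m + 1)) : W⁻¹ *ᵥ Bfull k = solVec ⟨0, hd⟩ k := by
    have := W.invertibleOfIsUnitDet hWinv
    refine Matrix.inv_mulVec_eq_vec (funext fun a => ?_)
    rw [mulVec_solVec hq1 hsum hint (by simpa only [kernel, Fin.succ_inj] using hW) k]
    exact hBfull k a.1 a.2
  have key (r k : Fin (m + 1)) (x : ℝ) : ∑ a, B r x a * (W⁻¹ *ᵥ Bfull k) a =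
      (if r = k then ρ r * (G r (Set.Iic x)).toReal else 0) -
        ∫ t in Set.Iic x, weight ρ η r t * weight ρ η k t ∂Gbar := by
    rw [hsol, sum_mul_solVec_eq_integral_kernel hsum (fun j' => (hint r j' _).restrict)
      (fun s => hB r x s _)]
    simp only [hq1, mul_one]
    subst hGbar
    exact setIntegral_kernel_weight hρpos hη (G 0) hG r k measurableSet_Iic
  exact ⟨key, fun r x => by rw [key, if_neg (Fin.succ_ne_zero r)]; ring⟩

/-- in the density ratio model with `q₁ ≡ 1`, `∫ ‖q‖² dḠ < ∞` and `W`
invertible, `B_r(x)ᵀ W⁻¹ B_k = δ_{rk} ρ_r G_r((-∞,x]) - c_{rk}(x)` for all `0 ≤ r,k ≤ m`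
and all real `x`; in particular `c_{r0}(x) + B_r(x)ᵀ W⁻¹ B_0 = 0` for `r ≥ 1`. -/
theorem drm_B_Winv_B_identity (m d : ℕ) (hm : 1 ≤ m) (hd : 1 ≤ d)
    (G : Fin (m + 1) → Measure ℝ) [∀ k, IsProbabilityMeasure (G k)]
    (q : ℝ → Fin d → ℝ) (hq : Measurable q)
    (hq1 : ∀ t, q t ⟨0, hd⟩ = 1)
    (θ : Fin (m + 1) → Fin d → ℝ) (hθ0 : θ 0 = 0)
    (hG : ∀ k, G k =
      (G 0).withDensity fun t => ENNReal.ofReal (Real.exp (∑ i, θ k i * q t i)))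
    (ρ : Fin (m + 1) → ℝ) (hρpos : ∀ k, 0 < ρ k) (hρsum : ∑ k, ρ k = 1)
    (hfun : Fin (m + 1) → ℝ → ℝ)
    (hhfun : ∀ k t, hfun k t =
      ρ k * Real.exp (∑ i, θ k i * q t i) /
        ∑ k', ρ k' * Real.exp (∑ i, θ k' i * q t i))
    (Gbar : Measure ℝ) (hGbar : Gbar = ∑ k, ENNReal.ofReal (ρ k) • G k)
    (hq2int : Integrable (fun t => ∑ i, (q t i) ^ 2) Gbar)
    (W : Matrix (Fin m × Fin d) (Fin m × Fin d) ℝ)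
    (hW : ∀ (r s : Fin m) (i j : Fin d), W (r, i) (s, j) =
      ∫ t, ((if r = s then hfun r.succ t else 0) - hfun r.succ t * hfun s.succ t) *
        (q t i * q t j) ∂Gbar)
    (hWinv : IsUnit W.det)
    (B : Fin (m + 1) → ℝ → Fin m × Fin d → ℝ)
    (hB : ∀ (r : Fin (m + 1)) (x : ℝ) (s : Fin m) (i : Fin d), B r x (s, i) =
      ∫ t in Set.Iic x,
        ((if r = s.succ then hfun r t else 0) - hfun r t * hfun s.succ t) * q t i ∂Gbar)
    (Bfull : Fin (m + 1) → Fin m × Fin d → ℝ)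
    (hBfull : ∀ (k : Fin (m + 1)) (s : Fin m) (i : Fin d), Bfull k (s, i) =
      ∫ t, ((if k = s.succ then hfun k t else 0) - hfun k t * hfun s.succ t) * q t i ∂Gbar) :
    (∀ (r k : Fin (m + 1)) (x : ℝ),
      ∑ a : Fin m × Fin d, B r x a * (W⁻¹).mulVec (Bfull k) a =
        (if r = k then ρ r * (G r (Set.Iic x)).toReal else 0) -
          ∫ t in Set.Iic x, hfun r t * hfun k t ∂Gbar) ∧
    (∀ (r : Fin m) (x : ℝ),
      (∫ t in Set.Iic x, hfun r.succ t * hfun 0 t ∂Gbar) +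
        ∑ a : Fin m × Fin d, B r.succ x a * (W⁻¹).mulVec (Bfull 0) a = 0) :=
  drm_B_Winv_B_identity_general m d hd G q hq hq1 θ hG ρ hρpos hfun hhfun Gbar hGbar hq2int W hW
    hWinv B hB Bfull hBfull
end

section
/- Assume the density ratio model (G_0, …, G_m Borel probability measures on ℝ; q : ℝ → ℝ^d Borel measurable with first component q_1 ≡ 1; θ_0 = 0, θ_1, …, θ_m ∈ ℝ^d; G_k with density exp(θ_kᵀ q(·)) with respect to G_0; h = Σ_k ρ_k exp(θ_kᵀ q), h_k = ρ_k exp(θ_kᵀ q)/h; Ḡ = Σ_k ρ_k G_k; ∫ ‖q‖² dḠ < ∞). Let n_0, …, n_m be positive integers, n = Σ n_k, ρ_k = n_k/n, and let {X_{kj} : 0 ≤ k ≤ m, 1 ≤ j ≤ n_k} be independent with X_{kj} ~ G_k. Define Z_n ∈ ℝ^{md} as the block vector whose rth block (1 ≤ r ≤ m) is Z_{n,r} = Σ_{k,j} [δ_{kr} − h_r(X_{kj})] q(X_{kj}). Let W have blocks W_{rs} = ∫ (δ_{rs} h_r − h_r h_s) q qᵀ dḠ and let B_k ∈ ℝ^{md}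 have sth block ∫ (δ_{ks} h_k − h_k h_s) q dḠ. Then E[Z_n] = 0 and the covariance matrix of Z_n equals n (W − Σ_{k=0}^m ρ_k^{-1} B_k B_kᵀ); if moreover W is invertible, this equals n (W − W S W), where S has (r,s) block (ρ_r^{-1} δ_{rs} + ρ_0^{-1}) e_1 e_1ᵀ with e_1 = (1,0,…,0)ᵀ ∈ ℝ^d. -/
/-!
Write each coordinate of `Z` as `∑ₖ ∑ⱼ φₖ(X_{kj})`, a sum of independent terms, so that its
mean is `∑ₖ nₖ E_{Gₖ} φₖ` and its covariance with another coordinate `∑ₖ ∑ⱼ ψₖ(X_{kj})` is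
`∑ₖ nₖ Cov_{Gₖ}(φₖ, ψₖ)`. Since `hₖ` is the
density of `ρₖ Gₖ` with respect to `Ḡ` and `nₖ = n ρₖ`, we have `nₖ E_{Gₖ} f = n ∫ hₖ f dḠ`, so
everything becomes a `Ḡ`-integral of `∑ₖ hₖ φₖ` or of `∑ₖ hₖ φₖ ψₖ`. As `∑ₖ hₖ = 1`, the first
vanishes pointwise and the second is the integrand of `W`. Finally, `q₁ ≡ 1` makes the columns of
`W` at the first coordinate equal to `B₁, …, B_m`, and `∑ₖ Bₖ = 0`; this is why the `ρ₀⁻¹`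
entries of `S` give `W S W = ∑ₖ ρₖ⁻¹ Bₖ Bₖᵀ`.
-/

open MeasureTheory ProbabilityTheory Finset

section Sample

variable {Ω α κ : Type*} {mΩ : MeasurableSpace Ω} [MeasurableSpace α] {P : Measure Ω}

theorem covariance_fun_sum_fun_sum_of_indepFun [IsFiniteMeasure P] {ι : Type*} [Fintype ι]
    {Y V : ι → Ω → ℝ} (hY : ∀ i, MemLp (Y i) 2 P) (hV : ∀ i, MemLp (V i) 2 P)
    (hindep : ∀ i j, i ≠ j → IndepFun (Y i) (V j) P) :
    cov[fun ω ↦ ∑ i, Y i ω, fun ω ↦ ∑ i, V i ω; P] = ∑ i, cov[Y i, V i; P] := by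
  rw [covariance_fun_sum_fun_sum hY hV]
  refine sum_congr rfl fun i _ ↦ sum_eq_single i (fun j _ hji ↦ ?_) (by simp)
  exact (hindep i j hji.symm).covariance_eq_zero (hY i) (hV j)

variable {n : κ → ℕ} {G : κ → Measure α} {X : (k : κ) → Fin (n k) → Ω → α}

theorem memLp_comp_sample (hX : ∀ k j, Measurable (X k j)) (hlaw : ∀ k j, P.map (X k j) = G k)
    {k : κ} {f : α → ℝ} {p : ENNReal} (hf : MemLp f p (G k)) (j : Fin (n k)) :
    MemLp (fun ω ↦ f (X k j ω)) p P :=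
  ((hlaw k j).symm ▸ hf).comp_of_map (hX k j).aemeasurable

variable [Fintype κ]

theorem memLp_sum_sample (hX : ∀ k j, Measurable (X k j)) (hlaw : ∀ k j, P.map (X k j) = G k)
    {f : κ → α → ℝ} {p : ENNReal} (hf : ∀ k, MemLp (f k) p (G k)) :
    MemLp (fun ω ↦ ∑ k, ∑ j, f k (X k j ω)) p P :=
  memLp_finsetSum _ fun k _ ↦ memLp_finsetSum _ fun j _ ↦ memLp_comp_sample hX hlaw (hf k) j

theorem integral_sum_sample (hX : ∀ k j, Measurable (X k j)) (hlaw : ∀ k j, P.map (X k j) = G k)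
    {f : κ → α → ℝ} (hf : ∀ k, Integrable (f k) (G k)) :
    ∫ ω, ∑ k, ∑ j, f k (X k j ω) ∂P = ∑ k, n k * ∫ t, f k t ∂(G k) := by
  have hfX : ∀ k j, Integrable (fun ω ↦ f k (X k j ω)) P := fun k j ↦
    ((hlaw k j).symm ▸ hf k).comp_measurable (hX k j)
  rw [integral_finsetSum _ fun k _ ↦ integrable_finsetSum _ fun j _ ↦ hfX k j]
  refine sum_congr rfl fun k _ ↦ ?_
  rw [integral_finsetSum _ fun j _ ↦ hfX k j]
  simp only [← integral_map (hX k _).aemeasurable ((hlaw k _).symm ▸ (hf k).1), hlaw,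
    sum_const, card_univ, Fintype.card_fin, nsmul_eq_mul]

theorem covariance_sum_sample [IsFiniteMeasure P] (hX : ∀ k j, Measurable (X k j))
    (hlaw : ∀ k j, P.map (X k j) = G k)
    (hindep : iIndepFun (fun x : Σ k, Fin (n k) ↦ X x.1 x.2) P) {f g : κ → α → ℝ}
    (hfm : ∀ k, Measurable (f k)) (hgm : ∀ k, Measurable (g k))
    (hf : ∀ k, MemLp (f k) 2 (G k)) (hg : ∀ k, MemLp (g k) 2 (G k)) :
    cov[fun ω ↦ ∑ k, ∑ j, f k (X k j ω), fun ω ↦ ∑ k, ∑ j, g k (X k j ω); P] =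
      ∑ k, n k * cov[f k, g k; G k] := by
  have hL2 : ∀ {u : κ → α → ℝ}, (∀ k, MemLp (u k) 2 (G k)) →
      ∀ x : Σ k, Fin (n k), MemLp (u x.1 ∘ X x.1 x.2) 2 P := fun hu x ↦
    memLp_comp_sample hX hlaw (hu x.1) x.2
  have hsigma : ∀ u : κ → α → ℝ, (fun ω ↦ ∑ k, ∑ j, u k (X k j ω)) =
      fun ω ↦ ∑ x : Σ k, Fin (n k), (u x.1 ∘ X x.1 x.2) ω := fun u ↦
    funext fun ω ↦ (Fintype.sum_sigma fun x : Σ k, Fin (n k) ↦ u x.1 (X x.1 x.2 ω)).symm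
  rw [hsigma, hsigma, covariance_fun_sum_fun_sum_of_indepFun (Y := fun x ↦ f x.1 ∘ X x.1 x.2)
    (V := fun x ↦ g x.1 ∘ X x.1 x.2) (hL2 hf) (hL2 hg)
    fun x y hxy ↦ (hindep.indepFun hxy).comp (hfm x.1) (hgm y.1), Fintype.sum_sigma]
  refine sum_congr rfl fun k _ ↦ ?_
  have hcov : ∀ j, cov[f k ∘ X k j, g k ∘ X k j; P] = cov[f k, g k; G k] := fun j ↦ by
    rw [← covariance_map ((hlaw k j).symm ▸ (hf k).1) ((hlaw k j).symm ▸ (hg k).1)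
      (hX k j).aemeasurable, hlaw]
  simp only [hcov, sum_const, card_univ, Fintype.card_fin, nsmul_eq_mul]

end Sample

section Mixture

variable {α κ : Type*} [MeasurableSpace α] [Fintype κ]

theorem MeasureTheory.MemLp.of_sum_smul_measure {G : κ → Measure α} {ρ : κ → ℝ} {k : κ}
    (hρ : 0 < ρ k) {f : α → ℝ} {p : ENNReal} (hf : MemLp f p (∑ k', ENNReal.ofReal (ρ k') • G k')) :
    MemLp f p (G k) := by
  have hρ' : ENNReal.ofReal (ρ k) ≠ 0 := ENNReal.ofReal_ne_zero_iff.2 hρ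
  refine hf.of_measure_le_smul (c := (ENNReal.ofReal (ρ k))⁻¹) (by simpa using hρ') ?_
  calc G k = (ENNReal.ofReal (ρ k))⁻¹ • ENNReal.ofReal (ρ k) • G k := by
        rw [smul_smul, ENNReal.inv_mul_cancel hρ' ENNReal.ofReal_ne_top, one_smul]
    _ ≤ _ := by gcongr; exact single_le_sum (fun _ _ ↦ Measure.zero_le _) (mem_univ k)

noncomputable def mixtureWeight (ρ : κ → ℝ) (w : κ → α → ℝ) (k : κ) (t : α) : ℝ :=
  ρ k * w k t / ∑ k', ρ k' * w k' t

structure IsPosteriorWeight (G : κ → Measure α) (ρ : κ → ℝ) (h : κ → α → ℝ) : Prop where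
  measurable : ∀ k, Measurable (h k)
  nonneg : ∀ k t, 0 ≤ h k t
  sum_eq_one : ∀ t, ∑ k, h k t = 1
  withDensity_eq : ∀ k, (∑ k', ENNReal.ofReal (ρ k') • G k').withDensity
    (fun t ↦ ENNReal.ofReal (h k t)) = ENNReal.ofReal (ρ k) • G k

theorem sum_smul_withDensity_ofReal (ν : Measure α) {ρ : κ → ℝ} (hρ : ∀ k, 0 ≤ ρ k)
    {w : κ → α → ℝ} (hw : ∀ k, Measurable (w k)) (hw0 : ∀ k t, 0 ≤ w k t) :
    ∑ k, ENNReal.ofReal (ρ k) • ν.withDensity (fun t ↦ ENNReal.ofReal (w k t)) =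
      ν.withDensity fun t ↦ ENNReal.ofReal (∑ k, ρ k * w k t) := by
  have hterm : ∀ k, ENNReal.ofReal (ρ k) • ν.withDensity (fun t ↦ ENNReal.ofReal (w k t)) =
      ν.withDensity fun t ↦ ENNReal.ofReal (ρ k * w k t) := fun k ↦ by
    simp_rw [ENNReal.ofReal_mul (hρ k)]
    exact (withDensity_smul' _ _ ENNReal.ofReal_ne_top).symm
  simp_rw [hterm, ← Measure.sum_fintype, ← withDensity_tsum fun k ↦
    ((hw k).const_mul (ρ k)).ennreal_ofReal]
  congr 1
  ext t
  rw [ENNReal.ofReal_sum_of_nonneg fun k _ ↦ mul_nonneg (hρ k) (hw0 k t),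
    tsum_apply (Pi.summable.2 fun _ ↦ ENNReal.summable), tsum_fintype]

theorem isPosteriorWeight_mixtureWeight [Nonempty κ] {G : κ → Measure α} {ν : Measure α}
    {ρ : κ → ℝ} (hρ : ∀ k, 0 < ρ k) {w : κ → α → ℝ} (hw : ∀ k, Measurable (w k))
    (hw0 : ∀ k t, 0 < w k t) (hG : ∀ k, G k = ν.withDensity fun t ↦ ENNReal.ofReal (w k t)) :
    IsPosteriorWeight G ρ (mixtureWeight ρ w) := by
  have hden : ∀ t, 0 < ∑ k, ρ k * w k t := fun t ↦
    sum_pos (fun k _ ↦ mul_pos (hρ k) (hw0 k t)) univ_nonempty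
  have hden_meas : Measurable fun t ↦ ∑ k, ρ k * w k t :=
    Finset.measurable_sum _ fun k _ ↦ (hw k).const_mul (ρ k)
  have hmeas : ∀ k, Measurable (mixtureWeight ρ w k) := fun k ↦
    ((hw k).const_mul (ρ k)).div hden_meas
  refine ⟨hmeas, fun k t ↦ div_nonneg (mul_pos (hρ k) (hw0 k t)).le (hden t).le,
    fun t ↦ by simp only [mixtureWeight]; rw [← sum_div, div_self (hden t).ne'], fun k ↦ ?_⟩
  simp_rw [hG, sum_smul_withDensity_ofReal ν (fun k ↦ (hρ k).le) hw fun k t ↦ (hw0 k t).le]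
  rw [← withDensity_mul _ hden_meas.ennreal_ofReal (hmeas k).ennreal_ofReal,
    ← withDensity_smul' _ _ ENNReal.ofReal_ne_top]
  congr 1
  ext t
  simp only [Pi.mul_apply, Pi.smul_apply, smul_eq_mul]
  rw [← ENNReal.ofReal_mul (hden t).le, ← ENNReal.ofReal_mul (hρ k).le, mixtureWeight,
    mul_div_cancel₀ _ (hden t).ne']

namespace IsPosteriorWeight

variable {G : κ → Measure α} {ρ : κ → ℝ} {h : κ → α → ℝ}

theorem integrable_mul (hh : IsPosteriorWeight G ρ h) {k : κ} {g : α → ℝ}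
    (hg : Integrable g (G k)) :
    Integrable (fun t ↦ h k t * g t) (∑ k', ENNReal.ofReal (ρ k') • G k') := by
  have hg' := hg.smul_measure (c := ENNReal.ofReal (ρ k)) ENNReal.ofReal_ne_top
  rw [← hh.withDensity_eq k, integrable_withDensity_iff_integrable_smul'
    (hh.measurable k).ennreal_ofReal (ae_of_all _ fun _ ↦ ENNReal.ofReal_lt_top)] at hg'
  simpa [ENNReal.toReal_ofReal (hh.nonneg k _)] using hg'

theorem integral_mul (hh : IsPosteriorWeight G ρ h) {k : κ} (hρ : 0 ≤ ρ k) (g : α → ℝ) :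
    ∫ t, h k t * g t ∂(∑ k', ENNReal.ofReal (ρ k') • G k') = ρ k * ∫ t, g t ∂(G k) := by
  rw [← ENNReal.toReal_ofReal hρ, ← smul_eq_mul, ← integral_smul_measure, ← hh.withDensity_eq k,
    integral_withDensity_eq_integral_toReal_smul (hh.measurable k).ennreal_ofReal
      (ae_of_all _ fun _ ↦ ENNReal.ofReal_lt_top)]
  simp [ENNReal.toReal_ofReal (hh.nonneg k _)]

theorem abs_ite_sub_le_one (hh : IsPosteriorWeight G ρ h) (p : Prop) [Decidable p] (r : κ)
    (t : α) :
    |(if p then 1 else 0) - h r t| ≤ 1 := by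
  have h0 := hh.nonneg r t
  have h1 : h r t ≤ 1 := hh.sum_eq_one t ▸
    single_le_sum (fun k _ ↦ hh.nonneg k t) (mem_univ r)
  rw [abs_le]
  split_ifs <;> constructor <;> linarith

end IsPosteriorWeight

end Mixture

section Score

variable {α κ ι : Type*} [DecidableEq κ]

def scoreTerm (h : κ → α → ℝ) (q : α → ι → ℝ) (r : κ) (i : ι) (k : κ) (t : α) : ℝ :=
  ((if k = r then 1 else 0) - h r t) * q t i

variable {h : κ → α → ℝ} {q : α → ι → ℝ}

theorem mul_scoreTerm (r : κ) (i : ι) (k : κ) (t : α) :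
    h k t * scoreTerm h q r i k t = ((if k = r then h k t else 0) - h k t * h r t) * q t i := by
  unfold scoreTerm; split_ifs <;> ring

theorem sum_mul_scoreTerm [Fintype κ] {t : α} (ht : ∑ k, h k t = 1) (r : κ) (i : ι) :
    ∑ k, h k t * scoreTerm h q r i k t = 0 := by
  simp only [mul_scoreTerm, ← sum_mul, sum_sub_distrib, sum_ite_eq', mem_univ, if_true, ht]
  ring

theorem sum_mul_scoreTerm_mul_scoreTerm [Fintype κ] {t : α} (ht : ∑ k, h k t = 1) (r s : κ)
    (i j : ι) :
    ∑ k, h k t * (scoreTerm h q r i k t * scoreTerm h q s j k t) =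
      ((if r = s then h r t else 0) - h r t * h s t) * (q t i * q t j) := by
  have hk : ∀ k, h k t * (scoreTerm h q r i k t * scoreTerm h q s j k t) =
      ((if k = r then (if r = s then h r t else 0) else 0) - (if k = r then h r t else 0) * h s t -
        (if k = s then h s t else 0) * h r t + h k t * (h r t * h s t)) * (q t i * q t j) := by
    intro k; unfold scoreTerm; split_ifs <;> subst_vars <;> simp_all <;> ring
  simp only [hk, ← sum_mul, sum_add_distrib, sum_sub_distrib, sum_ite_eq', mem_univ, if_true,
    ht]
  ring

theorem measurable_scoreTerm [MeasurableSpace α] (hh : ∀ k, Measurable (h k))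
    (hq : Measurable q) (r : κ) (i : ι) (k : κ) : Measurable (scoreTerm h q r i k) :=
  (measurable_const.sub (hh r)).mul ((measurable_pi_apply i).comp hq)

theorem IsPosteriorWeight.memLp_scoreTerm [MeasurableSpace α] [Fintype κ] {G : κ → Measure α}
    {ρ : κ → ℝ} (hh : IsPosteriorWeight G ρ h) (hq : Measurable q) {μ : Measure α}
    {p : ENNReal} {i : ι} (hqi : MemLp (fun t ↦ q t i) p μ) (r k : κ) :
    MemLp (scoreTerm h q r i k) p μ := by
  refine hqi.of_le (measurable_scoreTerm hh.measurable hq r i k).aestronglyMeasurable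
    (ae_of_all _ fun t ↦ ?_)
  rw [scoreTerm, norm_mul]
  exact mul_le_of_le_one_left (norm_nonneg _) (hh.abs_ite_sub_le_one _ r t)

end Score

theorem memLp_two_of_integrable_sum_sq {α ι : Type*} [MeasurableSpace α] [Fintype ι]
    {μ : Measure α} {q : α → ι → ℝ} (hq : Measurable q)
    (hq2 : Integrable (fun t ↦ ∑ i, q t i ^ 2) μ) (i : ι) : MemLp (fun t ↦ q t i) 2 μ := by
  have hqi : Measurable fun t ↦ q t i := (measurable_pi_apply i).comp hq
  refine (memLp_two_iff_integrable_sq hqi.aestronglyMeasurable).2 <|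
    hq2.mono' (hqi.pow_const 2).aestronglyMeasurable (ae_of_all _ fun t ↦ ?_)
  rw [Real.norm_eq_abs, abs_of_nonneg (sq_nonneg _)]
  exact single_le_sum (fun i _ ↦ sq_nonneg (q t i)) (mem_univ i)

section PosteriorSample

variable {Ω α κ : Type*} {mΩ : MeasurableSpace Ω} [MeasurableSpace α] {P : Measure Ω}
  [Fintype κ] {n : κ → ℕ} {G : κ → Measure α} {X : (k : κ) → Fin (n k) → Ω → α}
  {ρ : κ → ℝ} {h : κ → α → ℝ} {N : ℝ}

theorem IsPosteriorWeight.integral_sum_sample (hh : IsPosteriorWeight G ρ h)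
    (hρ : ∀ k, 0 ≤ ρ k) (hn : ∀ k, (n k : ℝ) = N * ρ k) (hX : ∀ k j, Measurable (X k j))
    (hlaw : ∀ k j, P.map (X k j) = G k) {f : κ → α → ℝ} (hf : ∀ k, Integrable (f k) (G k)) :
    ∫ ω, ∑ k, ∑ j, f k (X k j ω) ∂P =
      N * ∫ t, ∑ k, h k t * f k t ∂(∑ k, ENNReal.ofReal (ρ k) • G k) := by
  rw [_root_.integral_sum_sample hX hlaw hf,
    integral_finsetSum _ fun k _ ↦ hh.integrable_mul (hf k), mul_sum]
  simp only [hn, hh.integral_mul (hρ _), mul_assoc]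

theorem IsPosteriorWeight.covariance_sum_sample [IsFiniteMeasure P]
    [∀ k, IsProbabilityMeasure (G k)] (hh : IsPosteriorWeight G ρ h) (hρ : ∀ k, 0 < ρ k)
    (hn : ∀ k, (n k : ℝ) = N * ρ k) (hX : ∀ k j, Measurable (X k j))
    (hlaw : ∀ k j, P.map (X k j) = G k)
    (hindep : iIndepFun (fun x : Σ k, Fin (n k) ↦ X x.1 x.2) P) {f g : κ → α → ℝ}
    (hfm : ∀ k, Measurable (f k)) (hgm : ∀ k, Measurable (g k))
    (hf : ∀ k, MemLp (f k) 2 (G k)) (hg : ∀ k, MemLp (g k) 2 (G k)) :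
    cov[fun ω ↦ ∑ k, ∑ j, f k (X k j ω), fun ω ↦ ∑ k, ∑ j, g k (X k j ω); P] =
      N * (∫ t, ∑ k, h k t * (f k t * g k t) ∂(∑ k, ENNReal.ofReal (ρ k) • G k) -
        ∑ k, (ρ k)⁻¹ * ((∫ t, h k t * f k t ∂(∑ k, ENNReal.ofReal (ρ k) • G k)) *
          ∫ t, h k t * g k t ∂(∑ k, ENNReal.ofReal (ρ k) • G k))) := by
  rw [_root_.covariance_sum_sample hX hlaw hindep hfm hgm hf hg,
    integral_finsetSum _ fun k _ ↦
      hh.integrable_mul (g := fun t ↦ f k t * g k t) ((hf k).integrable_mul (hg k)),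
    ← sum_sub_distrib, mul_sum]
  refine sum_congr rfl fun k _ ↦ ?_
  rw [covariance_eq_sub (hf k) (hg k), hh.integral_mul (hρ k).le, hh.integral_mul (hρ k).le,
    hh.integral_mul (hρ k).le, hn k]
  simp only [Pi.mul_apply]
  field_simp

end PosteriorSample

theorem Matrix.mul_mul_apply_of_eq_mul_ite_mul_ite {ι ι' τ δ : Type*} [Fintype τ] [Fintype δ]
    [DecidableEq δ] (A : Matrix ι (τ × δ) ℝ) (S : Matrix (τ × δ) (τ × δ) ℝ)
    (C : Matrix (τ × δ) ι' ℝ) (T : Matrix τ τ ℝ) (i₀ : δ)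
    (hS : ∀ r s i j, S (r, i) (s, j) =
      T r s * ((if i = i₀ then 1 else 0) * (if j = i₀ then 1 else 0))) (a : ι) (b : ι') :
    (A * S * C) a b = ∑ r, ∑ s, A a (r, i₀) * T r s * C (s, i₀) b := by
  simp only [Matrix.mul_apply, Fintype.sum_prod_type, hS, sum_mul]
  simp only [mul_ite, ite_mul, mul_one, mul_zero, zero_mul, sum_ite_irrel, sum_const_zero,
    sum_ite_eq', mem_univ, if_true]
  rw [sum_comm]

theorem Fin.sum_sum_succ_mul_mul_eq_of_sum_eq_zero {m : ℕ} (c β γ : Fin (m + 1) → ℝ)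
    (hβ : ∑ k, β k = 0) (hγ : ∑ k, γ k = 0) :
    ∑ r : Fin m, ∑ s : Fin m, β r.succ * (c r.succ * (if r = s then 1 else 0) + c 0) * γ s.succ =
      ∑ k, c k * (β k * γ k) := by
  rw [Fin.sum_univ_succ] at hβ hγ ⊢
  have hβ0 : β 0 = -∑ r : Fin m, β r.succ := by linarith
  have hγ0 : γ 0 = -∑ r : Fin m, γ r.succ := by linarith
  simp only [mul_add, add_mul, sum_add_distrib, mul_ite, mul_one, mul_zero, ite_mul, zero_mul,
    sum_ite_eq, mem_univ, if_true, hβ0, hγ0]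
  rw [neg_mul_neg, sum_mul_sum, mul_sum, add_comm]
  congr 1
  · exact sum_congr rfl fun r _ ↦ by rw [mul_sum]; exact sum_congr rfl fun s _ ↦ by ring
  · exact sum_congr rfl fun r _ ↦ by ring

theorem Matrix.mul_mul_eq_sum_smul_vecMulVec {m : ℕ} {δ : Type*} [Fintype δ] [DecidableEq δ]
    (W S : Matrix (Fin m × δ) (Fin m × δ) ℝ) (B : Fin (m + 1) → Fin m × δ → ℝ)
    (c : Fin (m + 1) → ℝ) (i₀ : δ)
    (hS : ∀ r s i j, S (r, i) (s, j) = (c r.succ * (if r = s then 1 else 0) + c 0) *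
      ((if i = i₀ then 1 else 0) * (if j = i₀ then 1 else 0)))
    (hcol : ∀ a r, W a (r, i₀) = B r.succ a) (hrow : ∀ r b, W (r, i₀) b = B r.succ b)
    (hB : ∀ a, ∑ k, B k a = 0) :
    W * S * W = ∑ k, c k • vecMulVec (B k) (B k) := by
  ext a b
  rw [mul_mul_apply_of_eq_mul_ite_mul_ite W S W _ i₀ hS]
  simp only [hcol, hrow, sum_apply, smul_apply, vecMulVec_apply, smul_eq_mul]
  exact Fin.sum_sum_succ_mul_mul_eq_of_sum_eq_zero c (fun k ↦ B k a) (fun k ↦ B k b)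
    (hB a) (hB b)

theorem drm_score_mean_and_covariance_general (m d : ℕ) (hd : 1 ≤ d)
    (G : Fin (m + 1) → Measure ℝ) [∀ k, IsProbabilityMeasure (G k)]
    (q : ℝ → Fin d → ℝ) (hq : Measurable q)
    (hq1 : ∀ t, q t ⟨0, hd⟩ = 1)
    (θ : Fin (m + 1) → Fin d → ℝ)
    (hG : ∀ k, G k =
      (G 0).withDensity fun t => ENNReal.ofReal (Real.exp (∑ i, θ k i * q t i)))
    (n : Fin (m + 1) → ℕ) (hn : ∀ k, 0 < n k)
    (ρ : Fin (m + 1) → ℝ) (hρ : ∀ k, ρ k = (n k : ℝ) / ∑ k', (n k' : ℝ))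
    (hfun : Fin (m + 1) → ℝ → ℝ)
    (hhfun : ∀ k t, hfun k t =
      ρ k * Real.exp (∑ i, θ k i * q t i) /
        ∑ k', ρ k' * Real.exp (∑ i, θ k' i * q t i))
    (Gbar : Measure ℝ) (hGbar : Gbar = ∑ k, ENNReal.ofReal (ρ k) • G k)
    (hq2int : Integrable (fun t => ∑ i, (q t i) ^ 2) Gbar)
    {Ω : Type} [MeasurableSpace Ω] (P : Measure Ω) [IsProbabilityMeasure P]
    (X : (k : Fin (m + 1)) → Fin (n k) → Ω → ℝ)
    (hXmeas : ∀ k j, Measurable (X k j))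
    (hXlaw : ∀ k j, Measure.map (X k j) P = G k)
    (hXindep : iIndepFun
      (fun kj : Σ k : Fin (m + 1), Fin (n k) => X kj.1 kj.2) P)
    (Z : Ω → Fin m × Fin d → ℝ)
    (hZ : ∀ (ω : Ω) (r : Fin m) (i : Fin d), Z ω (r, i) =
      ∑ k, ∑ j, ((if k = r.succ then 1 else 0) - hfun r.succ (X k j ω)) * q (X k j ω) i)
    (W : Matrix (Fin m × Fin d) (Fin m × Fin d) ℝ)
    (hW : ∀ (r s : Fin m) (i j : Fin d), W (r, i) (s, j) =
      ∫ t, ((if r = s then hfun r.succ t else 0) - hfun r.succ t * hfun s.succ t) *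
        (q t i * q t j) ∂Gbar)
    (B : Fin (m + 1) → Fin m × Fin d → ℝ)
    (hB : ∀ (k : Fin (m + 1)) (s : Fin m) (i : Fin d), B k (s, i) =
      ∫ t, ((if k = s.succ then hfun k t else 0) - hfun k t * hfun s.succ t) * q t i ∂Gbar)
    (S : Matrix (Fin m × Fin d) (Fin m × Fin d) ℝ)
    (hS : ∀ (r s : Fin m) (i j : Fin d), S (r, i) (s, j) =
      ((ρ r.succ)⁻¹ * (if r = s then 1 else 0) + (ρ 0)⁻¹) *
        ((if i = (⟨0, hd⟩ : Fin d) then (1 : ℝ) else 0) *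
          (if j = (⟨0, hd⟩ : Fin d) then (1 : ℝ) else 0))) :
    (∀ a : Fin m × Fin d, ∫ ω, Z ω a ∂P = 0) ∧
    (∀ a b : Fin m × Fin d,
      (∫ ω, Z ω a * Z ω b ∂P) - (∫ ω, Z ω a ∂P) * (∫ ω, Z ω b ∂P) =
        (∑ k', (n k' : ℝ)) * (W - ∑ k, (ρ k)⁻¹ • Matrix.vecMulVec (B k) (B k)) a b) ∧
    (IsUnit W.det → ∀ a b : Fin m × Fin d,
      (∫ ω, Z ω a * Z ω b ∂P) - (∫ ω, Z ω a ∂P) * (∫ ω, Z ω b ∂P) =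
        (∑ k', (n k' : ℝ)) * (W - W * S * W) a b) := by
  set N : ℝ := ∑ k', (n k' : ℝ)
  have hN : 0 < N := sum_pos (fun k _ ↦ Nat.cast_pos.2 (hn k)) univ_nonempty
  have hρpos : ∀ k, 0 < ρ k := fun k ↦ by
    rw [hρ k]; exact div_pos (Nat.cast_pos.2 (hn k)) hN
  have hnN : ∀ k, (n k : ℝ) = N * ρ k := fun k ↦ by rw [hρ k, mul_div_cancel₀ _ hN.ne']
  have hh : IsPosteriorWeight G ρ hfun := by
    rw [show hfun = mixtureWeight ρ fun k t ↦ Real.exp (∑ i, θ k i * q t i) from funext₂ hhfun]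
    exact isPosteriorWeight_mixtureWeight hρpos (fun k ↦ by fun_prop) (fun k t ↦ Real.exp_pos _) hG
  subst hGbar
  set φ : Fin m × Fin d → Fin (m + 1) → ℝ → ℝ := fun a ↦ scoreTerm hfun q a.1.succ a.2
  have hφm : ∀ a k, Measurable (φ a k) := fun a ↦ measurable_scoreTerm hh.measurable hq _ _
  have hφL2 : ∀ a k, MemLp (φ a k) 2 (G k) := fun a k ↦ hh.memLp_scoreTerm hq
    ((memLp_two_of_integrable_sum_sq hq hq2int a.2).of_sum_smul_measure (hρpos k)) _ _
  have hZφ : ∀ a, (fun ω ↦ Z ω a) = fun ω ↦ ∑ k, ∑ j, φ a k (X k j ω) := fun a ↦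
    funext fun ω ↦ hZ ω a.1 a.2
  have hBφ : ∀ k a, B k a = ∫ t, hfun k t * φ a k t ∂(∑ k, ENNReal.ofReal (ρ k) • G k) :=
    fun k a ↦ by simp only [hB k a.1 a.2, φ, mul_scoreTerm]
  have hWφ : ∀ a b, W a b =
      ∫ t, ∑ k, hfun k t * (φ a k t * φ b k t) ∂(∑ k, ENNReal.ofReal (ρ k) • G k) :=
    fun a b ↦ by simp only [hW, φ, sum_mul_scoreTerm_mul_scoreTerm (hh.sum_eq_one _), Fin.succ_inj]
  have hZL2 : ∀ a, MemLp (fun ω ↦ Z ω a) 2 P := fun a ↦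
    hZφ a ▸ memLp_sum_sample hXmeas hXlaw (hφL2 a)
  have hmean : ∀ a, ∫ ω, Z ω a ∂P = 0 := fun a ↦ by
    rw [hZφ a, hh.integral_sum_sample (fun k ↦ (hρpos k).le) hnN hXmeas hXlaw
      fun k ↦ (hφL2 a k).integrable one_le_two]
    simp [φ, sum_mul_scoreTerm (hh.sum_eq_one _)]
  have hBsum : ∀ a, ∑ k, B k a = 0 := fun a ↦ by
    simp only [hBφ]
    rw [← integral_finsetSum _ fun k _ ↦ hh.integrable_mul ((hφL2 a k).integrable one_le_two)]
    simp [φ, sum_mul_scoreTerm (hh.sum_eq_one _)]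
  have hcov : ∀ a b, (∫ ω, Z ω a * Z ω b ∂P) - (∫ ω, Z ω a ∂P) * (∫ ω, Z ω b ∂P) =
      N * (W - ∑ k, (ρ k)⁻¹ • Matrix.vecMulVec (B k) (B k)) a b := fun a b ↦ by
    refine (covariance_eq_sub (hZL2 a) (hZL2 b)).symm.trans ?_
    rw [hZφ, hZφ, hh.covariance_sum_sample hρpos hnN hXmeas hXlaw hXindep
      (hφm a) (hφm b) (hφL2 a) (hφL2 b)]
    simp only [Matrix.sub_apply, Matrix.sum_apply, Matrix.smul_apply, Matrix.vecMulVec_apply,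
      smul_eq_mul, hWφ, hBφ]
  have hWcol : ∀ c r, W c (r, ⟨0, hd⟩) = B r.succ c := fun ⟨s, i⟩ r ↦ by
    simp only [hW, hB, hq1, mul_one, Fin.succ_inj, eq_comm (a := r)]
    congr 1; ext t; split_ifs with hsr <;> [subst hsr; skip] <;> ring
  have hWrow : ∀ r c, W (r, ⟨0, hd⟩) c = B r.succ c := fun r ⟨s, i⟩ ↦ by
    simp only [hW, hB, hq1, one_mul, Fin.succ_inj]
  have hWSW := Matrix.mul_mul_eq_sum_smul_vecMulVec W S B (fun k ↦ (ρ k)⁻¹) ⟨0, hd⟩ hS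
    hWcol hWrow hBsum
  exact ⟨hmean, hcov, fun _ ↦ hWSW ▸ hcov⟩

/-- the empirical-likelihood score
`Z_{n,r} = Σ_{k,j} [δ_{k,r} - h_r(X_{kj})] q(X_{kj})` (blocks `1 ≤ r ≤ m`) has mean zero
and covariance matrix `n (W - Σ_k ρ_k⁻¹ B_k B_kᵀ)`, which equals `n (W - W S W)` when `W`
is invertible. -/
theorem drm_score_mean_and_covariance (m d : ℕ) (hm : 1 ≤ m) (hd : 1 ≤ d)
    (G : Fin (m + 1) → Measure ℝ) [∀ k, IsProbabilityMeasure (G k)]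
    (q : ℝ → Fin d → ℝ) (hq : Measurable q)
    (hq1 : ∀ t, q t ⟨0, hd⟩ = 1)
    (θ : Fin (m + 1) → Fin d → ℝ) (hθ0 : θ 0 = 0)
    (hG : ∀ k, G k =
      (G 0).withDensity fun t => ENNReal.ofReal (Real.exp (∑ i, θ k i * q t i)))
    (n : Fin (m + 1) → ℕ) (hn : ∀ k, 0 < n k)
    (ρ : Fin (m + 1) → ℝ) (hρ : ∀ k, ρ k = (n k : ℝ) / ∑ k', (n k' : ℝ))
    (hfun : Fin (m + 1) → ℝ → ℝ)
    (hhfun : ∀ k t, hfun k t =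
      ρ k * Real.exp (∑ i, θ k i * q t i) /
        ∑ k', ρ k' * Real.exp (∑ i, θ k' i * q t i))
    (Gbar : Measure ℝ) (hGbar : Gbar = ∑ k, ENNReal.ofReal (ρ k) • G k)
    (hq2int : Integrable (fun t => ∑ i, (q t i) ^ 2) Gbar)
    {Ω : Type} [MeasurableSpace Ω] (P : Measure Ω) [IsProbabilityMeasure P]
    (X : (k : Fin (m + 1)) → Fin (n k) → Ω → ℝ)
    (hXmeas : ∀ k j, Measurable (X k j))
    (hXlaw : ∀ k j, Measure.map (X k j) P = G k)
    (hXindep : iIndepFun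
      (fun kj : Σ k : Fin (m + 1), Fin (n k) => X kj.1 kj.2) P)
    (Z : Ω → Fin m × Fin d → ℝ)
    (hZ : ∀ (ω : Ω) (r : Fin m) (i : Fin d), Z ω (r, i) =
      ∑ k, ∑ j, ((if k = r.succ then 1 else 0) - hfun r.succ (X k j ω)) * q (X k j ω) i)
    (W : Matrix (Fin m × Fin d) (Fin m × Fin d) ℝ)
    (hW : ∀ (r s : Fin m) (i j : Fin d), W (r, i) (s, j) =
      ∫ t, ((if r = s then hfun r.succ t else 0) - hfun r.succ t * hfun s.succ t) *
        (q t i * q t j) ∂Gbar)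
    (B : Fin (m + 1) → Fin m × Fin d → ℝ)
    (hB : ∀ (k : Fin (m + 1)) (s : Fin m) (i : Fin d), B k (s, i) =
      ∫ t, ((if k = s.succ then hfun k t else 0) - hfun k t * hfun s.succ t) * q t i ∂Gbar)
    (S : Matrix (Fin m × Fin d) (Fin m × Fin d) ℝ)
    (hS : ∀ (r s : Fin m) (i j : Fin d), S (r, i) (s, j) =
      ((ρ r.succ)⁻¹ * (if r = s then 1 else 0) + (ρ 0)⁻¹) *
        ((if i = (⟨0, hd⟩ : Fin d) then (1 : ℝ) else 0) *
          (if j = (⟨0, hd⟩ : Fin d) then (1 : ℝ) else 0))) :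
    (∀ a : Fin m × Fin d, ∫ ω, Z ω a ∂P = 0) ∧
    (∀ a b : Fin m × Fin d,
      (∫ ω, Z ω a * Z ω b ∂P) - (∫ ω, Z ω a ∂P) * (∫ ω, Z ω b ∂P) =
        (∑ k', (n k' : ℝ)) * (W - ∑ k, (ρ k)⁻¹ • Matrix.vecMulVec (B k) (B k)) a b) ∧
    (IsUnit W.det → ∀ a b : Fin m × Fin d,
      (∫ ω, Z ω a * Z ω b ∂P) - (∫ ω, Z ω a ∂P) * (∫ ω, Z ω b ∂P) =
        (∑ k', (n k' : ℝ)) * (W - W * S * W) a b) :=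
  drm_score_mean_and_covariance_general m d hd G q hq hq1 θ hG n hn ρ hρ hfun hhfun Gbar hGbar
    hq2int P X hXmeas hXlaw hXindep Z hZ W hW B hB S hS
end

section
/- Assume the density ratio model (G_0, …, G_m Borel probability measures on ℝ; q : ℝ → ℝ^d Borel measurable; θ_0 = 0, θ_1, …, θ_m ∈ ℝ^d; G_k with density exp(θ_kᵀ q(·)) with respect to G_0; ρ_0, …, ρ_m > 0, Σ ρ_k = 1; h = Σ_k ρ_k exp(θ_kᵀ q), h_k = ρ_k exp(θ_kᵀ q)/h; Ḡ = Σ_k ρ_k G_k; ∫ ‖q‖² dḠ < ∞). Define a_{rs}(x) = ∫_{(−∞,x]} (δ_{rs} h_r − h_r h_s) dḠ, let B_r(x) ∈ ℝ^{md} have sth block ∫_{(−∞,x]} (δ_{rs} h_r − h_r h_s) q dḠ (1 ≤ s ≤ m), and let W be the md × md block matrix with blocks W_{rs} = ∫ (δ_{rs} h_r − h_r h_s) q qᵀ dḠ (1 ≤ r, s ≤ m), assumed invertible. Then for every N ≥ 1, all indices r_1, …, r_N ∈ {0, …, m} and all reals x_1, …, x_N, the N × N matrix M with entries M_{ij} =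 (ρ_{r_i} ρ_{r_j})^{-1} [ a_{r_i r_j}(min{x_i, x_j}) − B_{r_i}(x_i)ᵀ W^{-1} B_{r_j}(x_j) ] is positive semidefinite. -/
/-!
For every `t` the matrix `C(t) = diag h(t) - h(t) h(t)ᵀ` is the covariance matrix of the
one-hot vector of a category drawn with probabilities `h(t)`, hence positive semidefinite.
Integrating `φ_p φ_{p'} C_{idx p, idx p'}` against `Ḡ` therefore gives a positive semidefinite
Gram matrix for any family of square-integrable test functions `φ_p` labelled by categories
`idx p`. With the test functions `ρ_{r_i}⁻¹ 1_{(-∞, x_i]}` (category `r_i`) and, for each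
`(s, l)`, `q_l` (category `s + 1`), its blocks are `(ρ_{r_i} ρ_{r_j})⁻¹ a_{r_i r_j}(min x_i x_j)`,
`ρ_{r_i}⁻¹ B_{r_i}(x_i)` and `W`, and `M` is the Schur complement of the invertible block `W`.
-/

open MeasureTheory Matrix

theorem Matrix.posSemidef_diagonal_sub_vecMulVec {ι : Type*} [Fintype ι] [DecidableEq ι]
    {w : ι → ℝ} (hw : ∀ k, 0 ≤ w k) (hsum : ∑ k, w k = 1) :
    (diagonal w - vecMulVec w w).PosSemidef := by
  refine .of_dotProduct_mulVec_nonneg (IsHermitian.ext fun k l => ?_) fun v => ?_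
  · by_cases h : k = l
    · subst h; simp
    · simp [h, Ne.symm h, vecMulVec_apply, mul_comm]
  · have hform : star v ⬝ᵥ ((diagonal w - vecMulVec w w) *ᵥ v) =
        ∑ k, w k * v k ^ 2 - (∑ k, w k * v k) ^ 2 := by
      simp only [star_trivial, dotProduct, mulVec, Matrix.sub_apply, diagonal_apply,
        vecMulVec_apply, sub_mul, ite_mul, zero_mul, Finset.sum_sub_distrib, Finset.sum_ite_eq,
        Finset.mem_univ, if_true, mul_sub, sq, Finset.sum_mul, Finset.mul_sum]
      congr 1 <;> refine Finset.sum_congr rfl fun k _ => ?_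
      · ring
      · exact Finset.sum_congr rfl fun l _ => by ring
    have hjensen := (even_two.convexOn_pow (𝕜 := ℝ)).map_sum_le (t := Finset.univ) (p := v)
      (fun k _ => hw k) hsum fun k _ => Set.mem_univ _
    simp only [smul_eq_mul] at hjensen
    exact hform ▸ sub_nonneg.2 hjensen

theorem Matrix.abs_diagonal_sub_vecMulVec_apply_le_one {ι : Type*} [Fintype ι] [DecidableEq ι]
    {w : ι → ℝ} (hw : ∀ k, 0 ≤ w k) (hsum : ∑ k, w k = 1) (k l : ι) :
    |(diagonal w - vecMulVec w w) k l| ≤ 1 := by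
  have hle : ∀ k, w k ≤ 1 := fun k =>
    hsum ▸ Finset.single_le_sum (fun k _ => hw k) (Finset.mem_univ k)
  have := hw k; have := hw l; have := hle k; have := hle l
  rw [Matrix.sub_apply, diagonal_apply, vecMulVec_apply, abs_le]
  split_ifs <;> constructor <;> nlinarith

theorem Matrix.PosSemidef.integral {α n : Type*} [MeasurableSpace α] {μ : Measure α} [Fintype n]
    {K : α → Matrix n n ℝ} (hK : ∀ i j, Integrable (fun t => K t i j) μ)
    (hpos : ∀ᵐ t ∂μ, (K t).PosSemidef) :
    (of fun i j => ∫ t, K t i j ∂μ).PosSemidef := by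
  refine .of_dotProduct_mulVec_nonneg (IsHermitian.ext fun i j => ?_) fun v => ?_
  · simp only [of_apply, star_trivial]
    exact integral_congr_ae (hpos.mono fun t ht => by simpa using congrFun₂ ht.1 i j)
  · have hint : ∀ i j, Integrable (fun t => star v i * (K t i j * v j)) μ :=
      fun i j => ((hK i j).mul_const _).const_mul _
    have hform : star v ⬝ᵥ ((of fun i j => ∫ t, K t i j ∂μ) *ᵥ v) =
        ∫ t, star v ⬝ᵥ (K t *ᵥ v) ∂μ := by
      simp only [dotProduct, mulVec, of_apply, Finset.mul_sum]
      rw [integral_finsetSum _ fun i _ => integrable_finsetSum _ fun j _ => hint i j]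
      refine Finset.sum_congr rfl fun i _ => ?_
      rw [integral_finsetSum _ fun j _ => hint i j]
      refine Finset.sum_congr rfl fun j _ => ?_
      rw [integral_const_mul, integral_mul_const]
    exact hform ▸ integral_nonneg_of_ae (hpos.mono fun t ht => ht.dotProduct_mulVec_nonneg v)

noncomputable def covGram {α ι P : Type*} [MeasurableSpace α] [DecidableEq ι] (μ : Measure α)
    (h : ι → α → ℝ) (idx : P → ι) (φ : P → α → ℝ) : Matrix P P ℝ :=
  of fun p p' => ∫ t, φ p t * φ p' t *
    (diagonal (h · t) - vecMulVec (h · t) (h · t)) (idx p) (idx p') ∂μ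

theorem posSemidef_covGram {α ι P : Type*} [MeasurableSpace α] {μ : Measure α} [Fintype ι]
    [DecidableEq ι] [Fintype P] {h : ι → α → ℝ} {idx : P → ι} {φ : P → α → ℝ}
    (hmeas : ∀ k, AEStronglyMeasurable (h k) μ) (hnonneg : ∀ k t, 0 ≤ h k t)
    (hsum : ∀ t, ∑ k, h k t = 1) (hφ : ∀ p, MemLp (φ p) 2 μ) :
    (covGram μ h idx φ).PosSemidef := by
  classical
  refine PosSemidef.integral (K := fun t => of fun p p' => φ p t * φ p' t *
      (diagonal (h · t) - vecMulVec (h · t) (h · t)) (idx p) (idx p')) (fun p p' => ?_)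
    (.of_forall fun t => ?_)
  · have hcov : AEStronglyMeasurable (fun t =>
        (diagonal (h · t) - vecMulVec (h · t) (h · t)) (idx p) (idx p')) μ := by
      simp only [Matrix.sub_apply, diagonal_apply, vecMulVec_apply]
      split_ifs <;> fun_prop
    exact ((hφ p).integrable_mul (hφ p')).mul_bdd hcov (.of_forall fun t =>
      abs_diagonal_sub_vecMulVec_apply_le_one (hnonneg · t) (hsum t) _ _)
  · convert ((posSemidef_diagonal_sub_vecMulVec (hnonneg · t) (hsum t)).submatrix idx
      |>.conjTranspose_mul_mul_same (diagonal (φ · t))) using 1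
    ext p p'
    simp only [Matrix.sub_apply, of_apply, conjTranspose_eq_transpose_of_trivial,
      diagonal_transpose, mul_diagonal, diagonal_mul, submatrix_apply]
    ring

theorem Matrix.PosSemidef.schur_complement_toBlocks₂₂ {m n : Type*} [Finite m] [Fintype n]
    [DecidableEq n] {M : Matrix (m ⊕ n) (m ⊕ n) ℝ} (hM : M.PosSemidef)
    (hD : IsUnit M.toBlocks₂₂.det) :
    (M.toBlocks₁₁ - M.toBlocks₁₂ * M.toBlocks₂₂⁻¹ * M.toBlocks₁₂ᴴ).PosSemidef := by
  let := invertibleOfIsUnitDet _ hD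
  have hDpos : M.toBlocks₂₂.PosDef :=
    (hM.submatrix Sum.inr).posDef_iff_isUnit.2 ((isUnit_iff_isUnit_det _).2 hD)
  have h21 : M.toBlocks₁₂ᴴ = M.toBlocks₂₁ := by
    rw [← fromBlocks_toBlocks M] at hM
    exact (isHermitian_fromBlocks_iff.1 hM.1).2.1
  rw [← PosDef.fromBlocks₂₂ _ _ hDpos, h21, fromBlocks_toBlocks]
  exact hM

theorem Matrix.scaledRows_mul_mul_conjTranspose_apply {ι κ : Type*} [Fintype κ] (c : ι → ℝ)
    (U : ι → κ → ℝ) (A : Matrix κ κ ℝ) (i j : ι) :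
    ((of fun i k => c i * U i k) * A * (of fun i k => c i * U i k)ᴴ) i j =
      c i * c j * ∑ k, U i k * (A *ᵥ U j) k := by
  simp only [mul_apply, of_apply, conjTranspose_apply, star_trivial, mulVec, dotProduct,
    Finset.mul_sum, Finset.sum_mul]
  rw [Finset.sum_comm]
  exact Finset.sum_congr rfl fun k _ => Finset.sum_congr rfl fun k' _ => by ring

theorem integral_indicator_const_mul {α : Type*} [MeasurableSpace α] {μ : Measure α} {s : Set α}
    (hs : MeasurableSet s) (c : ℝ) (f : α → ℝ) :
    ∫ t, s.indicator (fun _ => c) t * f t ∂μ = c * ∫ t in s, f t ∂μ := by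
  simp_rw [← Set.indicator_mul_left, integral_indicator hs, integral_const_mul]

theorem memLp_two_apply_of_integrable_sum_sq {α ι : Type*} [MeasurableSpace α] {μ : Measure α}
    [Fintype ι] {q : α → ι → ℝ} (hq : Measurable q)
    (hq2 : Integrable (fun t => ∑ i, q t i ^ 2) μ) (i : ι) : MemLp (fun t => q t i) 2 μ :=
  (memLp_two_iff_integrable_sq (by fun_prop)).2 <| hq2.mono' (by fun_prop) <| .of_forall fun t => by
    simpa using Finset.single_le_sum (f := fun j => q t j ^ 2) (fun j _ => sq_nonneg _)
      (Finset.mem_univ i)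

theorem isFiniteMeasure_sum_ofReal_smul {α ι : Type*} [MeasurableSpace α] (s : Finset ι)
    (ρ : ι → ℝ) (G : ι → Measure α) [∀ k, IsFiniteMeasure (G k)] :
    IsFiniteMeasure (∑ k ∈ s, ENNReal.ofReal (ρ k) • G k) :=
  have := fun k => (G k).smul_finite (ENNReal.ofReal_ne_top (r := ρ k))
  inferInstance

theorem nonneg_and_sum_eq_one_of_eq_div_sum {ι : Type*} [Fintype ι] [Nonempty ι] {w u : ι → ℝ}
    (hu : ∀ k, 0 < u k) (hw : ∀ k, w k = u k / ∑ l, u l) : (∀ k, 0 ≤ w k) ∧ ∑ k, w k = 1 := by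
  have hpos : 0 < ∑ l, u l := Finset.sum_pos (fun k _ => hu k) Finset.univ_nonempty
  simp_rw [hw]
  exact ⟨fun k => div_nonneg (hu k).le hpos.le, by rw [← Finset.sum_div, div_self hpos.ne']⟩

theorem drm_efficiency_matrix_posSemidef_general (m d : ℕ)
    (G : Fin (m + 1) → Measure ℝ) [∀ k, IsProbabilityMeasure (G k)]
    (q : ℝ → Fin d → ℝ) (hq : Measurable q)
    (θ : Fin (m + 1) → Fin d → ℝ)
    (ρ : Fin (m + 1) → ℝ) (hρpos : ∀ k, 0 < ρ k)
    (hfun : Fin (m + 1) → ℝ → ℝ)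
    (hhfun : ∀ k t, hfun k t =
      ρ k * Real.exp (∑ i, θ k i * q t i) /
        ∑ k', ρ k' * Real.exp (∑ i, θ k' i * q t i))
    (Gbar : Measure ℝ) (hGbar : Gbar = ∑ k, ENNReal.ofReal (ρ k) • G k)
    (hq2int : Integrable (fun t => ∑ i, (q t i) ^ 2) Gbar)
    (a : Fin (m + 1) → Fin (m + 1) → ℝ → ℝ)
    (ha : ∀ (r s : Fin (m + 1)) (x : ℝ), a r s x =
      ∫ t in Set.Iic x, ((if r = s then hfun r t else 0) - hfun r t * hfun s t) ∂Gbar)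
    (B : Fin (m + 1) → ℝ → Fin m × Fin d → ℝ)
    (hB : ∀ (r : Fin (m + 1)) (x : ℝ) (s : Fin m) (i : Fin d), B r x (s, i) =
      ∫ t in Set.Iic x,
        ((if r = s.succ then hfun r t else 0) - hfun r t * hfun s.succ t) * q t i ∂Gbar)
    (W : Matrix (Fin m × Fin d) (Fin m × Fin d) ℝ)
    (hW : ∀ (r s : Fin m) (i j : Fin d), W (r, i) (s, j) =
      ∫ t, ((if r = s then hfun r.succ t else 0) - hfun r.succ t * hfun s.succ t) *
        (q t i * q t j) ∂Gbar)
    (hWinv : IsUnit W.det)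
    (N : ℕ) (r : Fin N → Fin (m + 1)) (x : Fin N → ℝ) :
    Matrix.PosSemidef (Matrix.of fun i j : Fin N =>
      (ρ (r i) * ρ (r j))⁻¹ *
        (a (r i) (r j) (min (x i) (x j)) -
          ∑ c : Fin m × Fin d, B (r i) (x i) c * (W⁻¹).mulVec (B (r j) (x j)) c)) := by
  have hprob t := nonneg_and_sum_eq_one_of_eq_div_sum (w := (hfun · t))
    (fun k => mul_pos (hρpos k) (Real.exp_pos _)) (hhfun · t)
  have hmeas k : Measurable (hfun k) := by rw [funext (hhfun k)]; fun_prop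
  have : IsFiniteMeasure Gbar := hGbar ▸ isFiniteMeasure_sum_ofReal_smul _ ρ G
  let φ : Fin N ⊕ (Fin m × Fin d) → ℝ → ℝ :=
    Sum.elim (fun i => (Set.Iic (x i)).indicator fun _ => (ρ (r i))⁻¹) fun c t => q t c.2
  obtain ⟨Γ, hΓ_def⟩ : ∃ Γ, Γ = covGram Gbar hfun (Sum.elim r fun c => c.1.succ) φ := ⟨_, rfl⟩
  have hΓ : Γ.PosSemidef := hΓ_def ▸ posSemidef_covGram (fun k => (hmeas k).aestronglyMeasurable)
    (fun k t => (hprob t).1 k) (fun t => (hprob t).2) <| by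
      rintro (i | c)
      · exact (memLp_const _).indicator measurableSet_Iic
      · exact memLp_two_apply_of_integrable_sum_sq hq hq2int c.2
  have h11 : Γ.toBlocks₁₁ =
      of fun i j => (ρ (r i) * ρ (r j))⁻¹ * a (r i) (r j) (min (x i) (x j)) := by
    ext i j
    rw [toBlocks₁₁, of_apply, of_apply, hΓ_def, covGram, of_apply, ha, mul_inv,
      ← integral_indicator_const_mul measurableSet_Iic]
    congr 1 with t
    simp [φ, ← Set.inter_indicator_mul, diagonal_apply, vecMulVec_apply]
  have h12 : Γ.toBlocks₁₂ = of fun i c => (ρ (r i))⁻¹ * B (r i) (x i) c := by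
    ext i ⟨s, l⟩
    rw [toBlocks₁₂, of_apply, of_apply, hΓ_def, covGram, of_apply, hB,
      ← integral_indicator_const_mul measurableSet_Iic]
    congr 1 with t
    simp only [φ, Sum.elim_inl, Sum.elim_inr, Matrix.sub_apply, diagonal_apply, vecMulVec_apply]
    ring
  have h22 : Γ.toBlocks₂₂ = W := by
    ext ⟨s, k⟩ ⟨s', l⟩
    rw [toBlocks₂₂, of_apply, hΓ_def, covGram, of_apply, hW]
    congr 1 with t
    simp only [φ, Sum.elim_inr, Matrix.sub_apply, diagonal_apply, Fin.succ_inj, vecMulVec_apply]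
    ring
  have hS := hΓ.schur_complement_toBlocks₂₂ (h22 ▸ hWinv)
  rw [h11, h12, h22] at hS
  convert hS using 1
  ext i j
  rw [Matrix.sub_apply, scaledRows_mul_mul_conjTranspose_apply, of_apply, of_apply, mul_inv]
  ring

/-- efficiency gain matrix. Under the density ratio model with `W`
invertible, for any points `(r_1, x_1), …, (r_N, x_N)` the matrix with entries
`(ρ_{r_i} ρ_{r_j})⁻¹ [a_{r_i r_j}(min{x_i,x_j}) - B_{r_i}(x_i)ᵀ W⁻¹ B_{r_j}(x_j)]`
is positive semidefinite (Theorem 4.1: Ω_EM - Ω_EL ≥ 0). -/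
theorem drm_efficiency_matrix_posSemidef (m d : ℕ) (hm : 1 ≤ m) (hd : 1 ≤ d)
    (G : Fin (m + 1) → Measure ℝ) [∀ k, IsProbabilityMeasure (G k)]
    (q : ℝ → Fin d → ℝ) (hq : Measurable q)
    (θ : Fin (m + 1) → Fin d → ℝ) (hθ0 : θ 0 = 0)
    (hG : ∀ k, G k =
      (G 0).withDensity fun t => ENNReal.ofReal (Real.exp (∑ i, θ k i * q t i)))
    (ρ : Fin (m + 1) → ℝ) (hρpos : ∀ k, 0 < ρ k) (hρsum : ∑ k, ρ k = 1)
    (hfun : Fin (m + 1) → ℝ → ℝ)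
    (hhfun : ∀ k t, hfun k t =
      ρ k * Real.exp (∑ i, θ k i * q t i) /
        ∑ k', ρ k' * Real.exp (∑ i, θ k' i * q t i))
    (Gbar : Measure ℝ) (hGbar : Gbar = ∑ k, ENNReal.ofReal (ρ k) • G k)
    (hq2int : Integrable (fun t => ∑ i, (q t i) ^ 2) Gbar)
    (a : Fin (m + 1) → Fin (m + 1) → ℝ → ℝ)
    (ha : ∀ (r s : Fin (m + 1)) (x : ℝ), a r s x =
      ∫ t in Set.Iic x, ((if r = s then hfun r t else 0) - hfun r t * hfun s t) ∂Gbar)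
    (B : Fin (m + 1) → ℝ → Fin m × Fin d → ℝ)
    (hB : ∀ (r : Fin (m + 1)) (x : ℝ) (s : Fin m) (i : Fin d), B r x (s, i) =
      ∫ t in Set.Iic x,
        ((if r = s.succ then hfun r t else 0) - hfun r t * hfun s.succ t) * q t i ∂Gbar)
    (W : Matrix (Fin m × Fin d) (Fin m × Fin d) ℝ)
    (hW : ∀ (r s : Fin m) (i j : Fin d), W (r, i) (s, j) =
      ∫ t, ((if r = s then hfun r.succ t else 0) - hfun r.succ t * hfun s.succ t) *
        (q t i * q t j) ∂Gbar)
    (hWinv : IsUnit W.det)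
    (N : ℕ) (hN : 1 ≤ N) (r : Fin N → Fin (m + 1)) (x : Fin N → ℝ) :
    Matrix.PosSemidef (Matrix.of fun i j : Fin N =>
      (ρ (r i) * ρ (r j))⁻¹ *
        (a (r i) (r j) (min (x i) (x j)) -
          ∑ c : Fin m × Fin d, B (r i) (x i) c * (W⁻¹).mulVec (B (r j) (x j)) c)) :=
  drm_efficiency_matrix_posSemidef_general m d G q hq θ ρ hρpos hfun hhfun Gbar hGbar hq2int a ha B
    hB W hW hWinv N r x
end
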